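/- arXiv:1905.02592 — 4 statements merged into one kernel-verified Lean document; each statement's English description precedes it below -/
import Mathlib

section
/- There exists a universal constant c > 0 such that for every finite connected weighted simple graph G = (V,E,w) with positive edge weights, every root vertex rt ∈ V, and every real ε ∈ (0,1), there exists a spanning tree T' of G such that d_{T'}(rt,v) ≤ (1+ε)·d_G(rt,v) for every vertex v, and w(T') ≤ (1 + c/ε)·w(T), where T is a minimum spanning tree of G. -/
/-- The total weight of a walk: the sum of the weights of its edges
(with multiplicity). -/
noncomputable def walkWeight {V : Type*} {G : SimpleGraph V} (w : Sym2 V → ℝ)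
    {u v : V} (p : G.Walk u v) : ℝ :=
  (p.edges.map w).sum

/-- The shortest-path distance in a weighted graph: the infimum of the weights
of walks between the two vertices. -/
noncomputable def gdist {V : Type*} (G : SimpleGraph V) (w : Sym2 V → ℝ) (u v : V) : ℝ :=
  sInf {x : ℝ | ∃ p : G.Walk u v, walkWeight w p = x}

/-- The total weight of a (sub)graph: the sum of the weights of its edges. -/
noncomputable def graphWeight {V : Type*} [Fintype V] (G : SimpleGraph V)
    (w : Sym2 V → ℝ) : ℝ :=
  ∑ e ∈ G.edgeSet.toFinite.toFinset, w e


namespace SLT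
open SimpleGraph Walk

variable {V : Type*} {G : SimpleGraph V} {w : Sym2 V → ℝ}

@[simp] lemma walkWeight_nil {u : V} : walkWeight w (Walk.nil : G.Walk u u) = 0 := by
  simp [walkWeight]

@[simp] lemma walkWeight_cons {u v x : V} (h : G.Adj u v) (p : G.Walk v x) :
    walkWeight w (Walk.cons h p) = w s(u, v) + walkWeight w p := by
  simp [walkWeight]

@[simp] lemma walkWeight_append {u v x : V} (p : G.Walk u v) (q : G.Walk v x) :
    walkWeight w (p.append q) = walkWeight w p + walkWeight w q := by
  simp [walkWeight, Walk.edges_append]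

@[simp] lemma walkWeight_reverse {u v : V} (p : G.Walk u v) :
    walkWeight w p.reverse = walkWeight w p := by
  rw [walkWeight, walkWeight, Walk.edges_reverse, List.map_reverse, List.sum_reverse]

lemma walkWeight_nonneg (hw : ∀ e ∈ G.edgeSet, 0 ≤ w e) {u v : V} (p : G.Walk u v) :
    0 ≤ walkWeight w p := by
  apply List.sum_nonneg
  intro x hx
  obtain ⟨e, he, rfl⟩ := List.mem_map.mp hx
  exact hw e (p.edges_subset_edgeSet he)

lemma gdist_bddBelow (hw : ∀ e ∈ G.edgeSet, 0 ≤ w e) (u v : V) :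
    BddBelow {x : ℝ | ∃ p : G.Walk u v, walkWeight w p = x} := by
  refine ⟨0, fun x hx => ?_⟩
  obtain ⟨p, rfl⟩ := hx
  exact walkWeight_nonneg hw p

lemma gdist_le (hw : ∀ e ∈ G.edgeSet, 0 ≤ w e) {u v : V} (p : G.Walk u v) :
    gdist G w u v ≤ walkWeight w p :=
  csInf_le (gdist_bddBelow hw u v) ⟨p, rfl⟩

lemma gdist_nonneg (hw : ∀ e ∈ G.edgeSet, 0 ≤ w e) (hc : G.Reachable u v) :
    0 ≤ gdist G w u v := by
  apply le_csInf
  · obtain ⟨p⟩ := hc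
    exact ⟨walkWeight w p, p, rfl⟩
  · rintro x ⟨p, rfl⟩
    exact walkWeight_nonneg hw p

/-- sum over a nodup sublist is at most the full sum, for nonneg weights -/
lemma list_sum_le {α : Type*} [DecidableEq α] (l₁ l₂ : List α) (f : α → ℝ)
    (h₁ : l₁.Nodup) (hsub : l₁ ⊆ l₂) (hf : ∀ e ∈ l₂, 0 ≤ f e) :
    (l₁.map f).sum ≤ (l₂.map f).sum := by
  rw [Finset.sum_list_map_count, Finset.sum_list_map_count]
  have h1 : ∀ m ∈ l₁.toFinset, l₁.count m • f m = f m := by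
    intro m hm
    rw [List.count_eq_one_of_mem h₁ (List.mem_toFinset.mp hm), one_smul]
  rw [Finset.sum_congr rfl h1]
  have hsub' : l₁.toFinset ⊆ l₂.toFinset := by
    intro x hx; simp only [List.mem_toFinset] at *; exact hsub hx
  calc ∑ m ∈ l₁.toFinset, f m ≤ ∑ m ∈ l₂.toFinset, f m := by
        apply Finset.sum_le_sum_of_subset_of_nonneg hsub'
        intro i hi _
        exact hf i (List.mem_toFinset.mp hi)
    _ ≤ ∑ m ∈ l₂.toFinset, l₂.count m • f m := by
        apply Finset.sum_le_sum
        intro i hi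
        have hc : 1 ≤ l₂.count i := List.one_le_count_iff.mpr (List.mem_toFinset.mp hi)
        have := hf i (List.mem_toFinset.mp hi)
        calc f i = 1 • f i := (one_smul _ _).symm
          _ ≤ l₂.count i • f i := by
            apply smul_le_smul_of_nonneg_right hc this

lemma exists_attaining_path (hw : ∀ e ∈ G.edgeSet, 0 ≤ w e) [Fintype V]
    {u v : V} (hr : G.Reachable u v) :
    ∃ p : G.Walk u v, p.IsPath ∧ walkWeight w p = gdist G w u v := by
  classical
  -- finite set of path weights
  have hfin : (Set.range (fun p : G.Path u v => walkWeight w p.1)).Finite :=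
    Set.finite_range _
  have hne : (Set.range (fun p : G.Path u v => walkWeight w p.1)).Nonempty :=
    ⟨walkWeight w hr.some.toPath.1, hr.some.toPath, rfl⟩
  obtain ⟨m, hmmem, hmmin⟩ := Set.Finite.exists_minimalFor id _ hfin hne
  obtain ⟨p₀, hp₀⟩ := hmmem
  have hmin : ∀ q : G.Path u v, m ≤ walkWeight w q.1 := by
    intro q
    by_contra hlt
    push_neg at hlt
    have := hmmin (j := walkWeight w q.1) ⟨q, rfl⟩ (le_of_lt hlt)
    simp only [id] at this
    linarith
  simp only [] at hp₀
  refine ⟨p₀.1, p₀.2, ?_⟩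
  rw [hp₀]
  have hlb : ∀ x ∈ {x : ℝ | ∃ p : G.Walk u v, walkWeight w p = x}, m ≤ x := by
    rintro x ⟨p, rfl⟩
    calc m ≤ walkWeight w p.toPath.1 := hmin p.toPath
      _ ≤ walkWeight w p := by
        apply list_sum_le _ _ _ (p.toPath.2.edges_nodup)
          (Walk.edges_bypass_subset p)
        intro e he
        exact hw e (p.edges_subset_edgeSet he)
  have h1 : gdist G w u v ≤ m := hp₀ ▸ gdist_le hw p₀.1
  have h2 : m ≤ gdist G w u v := le_csInf ⟨walkWeight w p₀.1, p₀.1, rfl⟩ hlb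
  linarith
lemma spt_exists {V : Type*} [Fintype V] (H : SimpleGraph V) (w : Sym2 V → ℝ)
    (hc : H.Connected) (hw : ∀ e ∈ H.edgeSet, 0 < w e) (rt : V) :
    ∃ T : SimpleGraph V, T ≤ H ∧ T.IsTree ∧
      ∀ v : V, ∃ q : T.Walk rt v, walkWeight w q ≤ gdist H w rt v := by
  classical
  have hw0 : ∀ e ∈ H.edgeSet, 0 ≤ w e := fun e he => le_of_lt (hw e he)
  set d : V → ℝ := fun v => gdist H w rt v with hd
  have hpar : ∀ v : V, v ≠ rt → ∃ u : V, H.Adj v u ∧ d u + w s(v, u) ≤ d v ∧ d u < d v := by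
    intro v hv
    obtain ⟨p, hp, hpw⟩ := exists_attaining_path hw0 (hc.preconnected rt v)
    cases hpr : p.reverse with
    | nil => exact absurd rfl hv
    | @cons _ u _ h q =>
      refine ⟨u, h, ?_⟩
      have h1 : walkWeight w p.reverse = d v := by rw [walkWeight_reverse, hpw]
      rw [hpr, walkWeight_cons] at h1
      have h2 : d u ≤ walkWeight w q := by
        have := gdist_le hw0 q.reverse
        rwa [walkWeight_reverse] at this
      have h3 : 0 < w s(v, u) := hw _ (H.mem_edgeSet.mpr h)
      constructor
      · linarith
      · linarith
  set par : V → V := fun v => if h : v ≠ rt then (hpar v h).choose else rt with hparDef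
  have hadj : ∀ v, v ≠ rt → H.Adj v (par v) := by
    intro v hv; simp only [hparDef, dif_pos hv]; exact (hpar v hv).choose_spec.1
  have hle : ∀ v, (hv : v ≠ rt) → d (par v) + w s(v, par v) ≤ d v := by
    intro v hv; simp only [hparDef, dif_pos hv]; exact (hpar v hv).choose_spec.2.1
  have hlt : ∀ v, (hv : v ≠ rt) → d (par v) < d v := by
    intro v hv; simp only [hparDef, dif_pos hv]; exact (hpar v hv).choose_spec.2.2
  set T : SimpleGraph V := SimpleGraph.fromEdgeSet {e | ∃ v, v ≠ rt ∧ e = s(v, par v)}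
    with hT
  have hTadj : ∀ a b : V, T.Adj a b ↔ ((∃ v, v ≠ rt ∧ s(v, par v) = s(a, b)) ∧ a ≠ b) := by
    intro a b
    rw [hT, SimpleGraph.fromEdgeSet_adj]
    simp only [Set.mem_setOf_eq, eq_comm]
  have hTH : T ≤ H := by
    intro a b hab
    rw [hTadj] at hab
    obtain ⟨⟨v, hv, he⟩, hne⟩ := hab
    rw [Sym2.eq_iff] at he
    rcases he with ⟨rfl, rfl⟩ | ⟨rfl, rfl⟩
    · exact hadj _ hv
    · exact (hadj _ hv).symm
  -- the parent edge is in T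
  have hTpar : ∀ v, v ≠ rt → T.Adj v (par v) := by
    intro v hv
    rw [hTadj]
    exact ⟨⟨v, hv, rfl⟩, (hadj v hv).ne⟩
  -- rank induction
  set rank : V → ℕ := fun v => (Finset.univ.filter (fun u => d u < d v)).card with hrankDef
  have hrank : ∀ a b : V, d a < d b → rank a < rank b := by
    intro a b hab
    apply Finset.card_lt_card
    constructor
    · intro u hu
      simp only [Finset.mem_filter, Finset.mem_univ, true_and] at *
      linarith
    · intro hsub
      have ha : a ∈ Finset.univ.filter (fun u => d u < d b) := by
        simp [hab]
      have := hsub ha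
      simp at this
  have key : ∀ n : ℕ, ∀ v : V, rank v ≤ n → ∃ q : T.Walk v rt, walkWeight w q ≤ d v := by
    intro n
    induction n with
    | zero =>
      intro v hv
      by_cases hvrt : v = rt
      · refine ⟨(Walk.nil : T.Walk v v).copy rfl hvrt, ?_⟩
        have h0 : 0 ≤ d v := gdist_nonneg hw0 (hc.preconnected rt v)
        simpa [walkWeight, Walk.edges_copy] using h0
      · exfalso
        have := hrank _ _ (hlt v hvrt)
        omega
    | succ n ih =>
      intro v hv
      by_cases hvrt : v = rt
      · refine ⟨(Walk.nil : T.Walk v v).copy rfl hvrt, ?_⟩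
        have h0 : 0 ≤ d v := gdist_nonneg hw0 (hc.preconnected rt v)
        simpa [walkWeight, Walk.edges_copy] using h0
      · have hrk : rank (par v) ≤ n := by
          have := hrank _ _ (hlt v hvrt)
          omega
        obtain ⟨q, hq⟩ := ih (par v) hrk
        refine ⟨Walk.cons (hTpar v hvrt) q, ?_⟩
        rw [walkWeight_cons]
        have := hle v hvrt
        linarith
  have hreach : ∀ v : V, T.Reachable v rt := fun v =>
    ⟨(key (rank v) v le_rfl).choose⟩
  have hconn : T.Connected := by
    haveI : Nonempty V := ⟨rt⟩
    exact ⟨fun a b => (hreach a).trans (hreach b).symm⟩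
  have hacyc : T.IsAcyclic := by
    intro v₀ c hcyc
    obtain ⟨m, hmS, hmax⟩ := Finset.exists_max_image c.support.toFinset d
      ⟨v₀, List.mem_toFinset.mpr c.start_mem_support⟩
    rw [List.mem_toFinset] at hmS
    have hmax' : ∀ x ∈ (c.rotate m hmS).support, d x ≤ d m := by
      intro x hx
      have : x ∈ c.support := by
        rcases (Walk.mem_support_iff (c.rotate m hmS)).mp hx with rfl | hx'
        · exact hmS
        · have hrot := Walk.support_rotate c m hmS
          have := hrot.mem_iff.mp hx'
          exact c.support.mem_of_mem_tail this
      exact hmax x (List.mem_toFinset.mpr this)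
    have hcyc₂ : (c.rotate m hmS).IsCycle := hcyc.rotate hmS
    -- destruct the rotated cycle
    set c₂ := c.rotate m hmS with hc₂def
    clear_value c₂
    cases c₂ with
    | nil => exact Walk.IsCycle.not_of_nil hcyc₂
    | @cons _ x _ h q =>
      -- last edge of q
      cases hq : q.reverse with
      | nil =>
        have := congrArg Walk.reverse hq
        rw [Walk.reverse_reverse] at this
        subst this
        exact h.ne rfl
      | @cons _ y _ h₂ q₂ =>
        -- h₂ : T.Adj m y
        have hymem : s(m, y) ∈ q.edges := by
          have : s(m, y) ∈ q.reverse.edges := by rw [hq]; simp [Walk.edges_cons]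
          rwa [Walk.edges_reverse, List.mem_reverse] at this
        have hnodup : (Walk.cons h q).edges.Nodup := hcyc₂.isTrail.edges_nodup
        rw [Walk.edges_cons, List.nodup_cons] at hnodup
        have hxy : x ≠ y := by
          rintro rfl
          exact hnodup.1 hymem
        have hxsup : x ∈ (Walk.cons h q).support := by simp
        have hysup : y ∈ (Walk.cons h q).support := by
          have : y ∈ q.reverse.support := by rw [hq]; simp
          rw [Walk.support_reverse, List.mem_reverse] at this
          rw [Walk.support_cons]
          exact List.mem_cons_of_mem _ this
        have hneigh : ∀ z : V, T.Adj m z → z ∈ (Walk.cons h q).support → z = par m := by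
          intro z hz hzs
          rw [hTadj] at hz
          obtain ⟨⟨v, hv, he⟩, hne⟩ := hz
          rw [Sym2.eq_iff] at he
          rcases he with ⟨rfl, h2⟩ | ⟨rfl, h2⟩
          · exact h2.symm
          · exfalso
            have h1 := hlt _ hv
            rw [h2] at h1
            have h2' := hmax' _ hzs
            linarith
        have := (hneigh x h hxsup).trans (hneigh y h₂ hysup).symm
        exact hxy this
  refine ⟨T, hTH, ⟨hconn, hacyc⟩, ?_⟩
  intro v
  obtain ⟨q, hq⟩ := key (rank v) v le_rfl
  exact ⟨q.reverse, by rwa [walkWeight_reverse]⟩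
lemma reachable_induce {V : Type*} {T : SimpleGraph V} {s : Set V} :
    ∀ {a b : V} (p : T.Walk a b) (ha : a ∈ s) (hb : b ∈ s)
      (_ : ∀ v ∈ p.support, v ∈ s), (T.induce s).Reachable ⟨a, ha⟩ ⟨b, hb⟩ := by
  intro a b p
  induction p with
  | nil => intro ha hb _; rfl
  | @cons a c b h p ih =>
    intro ha hb hsup
    have hc : c ∈ s := hsup c (by simp [Walk.support_cons])
    have hadj : (T.induce s).Adj ⟨a, ha⟩ ⟨c, hc⟩ := by
      simp only [SimpleGraph.comap_adj, Function.Embedding.coe_subtype]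
      exact h
    exact (hadj.reachable).trans (ih hc hb (fun v hv => hsup v (by simp [Walk.support_cons, hv])))

lemma exists_leaf {V : Type*} [Fintype V] {T : SimpleGraph V} (hT : T.IsTree) (r : V)
    (hcard : 2 ≤ Fintype.card V) :
    ∃ ℓ u : V, ℓ ≠ r ∧ T.Adj ℓ u ∧ ∀ x, T.Adj ℓ x → x = u := by
  classical
  haveI : DecidableRel T.Adj := Classical.decRel _
  haveI : Nonempty (Σ v : V, T.Path r v) := ⟨⟨r, SimpleGraph.Path.nil⟩⟩
  obtain ⟨⟨ℓ, P⟩, hmax⟩ := Finite.exists_max (fun x : Σ v : V, T.Path r v => x.2.1.length)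
  -- some vertex different from r
  obtain ⟨v, hv⟩ := Fintype.exists_ne_of_one_lt_card (by omega) r
  have hP1 : 1 ≤ P.1.length := by
    obtain ⟨p₀⟩ := hT.isConnected.preconnected r v
    have h1 : 1 ≤ p₀.toPath.1.length := by
      rcases Nat.eq_zero_or_pos p₀.toPath.1.length with h0 | h
      · exact absurd (Walk.eq_of_length_eq_zero h0) (Ne.symm hv)
      · exact h
    exact le_trans h1 (hmax ⟨v, p₀.toPath⟩)
  have hℓr : ℓ ≠ r := by
    rintro rfl
    have : P.1 = Walk.nil := Walk.isPath_iff_eq_nil.mp P.2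
    rw [this] at hP1
    simp at hP1
  cases hrev : P.1.reverse with
  | nil => exact absurd rfl hℓr
  | @cons _ u _ h q =>
    refine ⟨ℓ, u, hℓr, h, ?_⟩
    intro x hx
    by_cases hxs : x ∈ P.1.support
    · -- unique path from x to ℓ forces x to be penultimate
      have hdrop : P.1.dropUntil x hxs = Walk.cons hx.symm Walk.nil := by
        have := hT.IsAcyclic.path_unique
          ⟨P.1.dropUntil x hxs, P.2.dropUntil hxs⟩ (SimpleGraph.Path.singleton hx.symm)
        exact congrArg Subtype.val this
      have hsplit := P.1.take_spec hxs
      -- supports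
      have h1 : P.1.support.reverse = ℓ :: x :: (P.1.takeUntil x hxs).support.reverse.tail := by
        conv_lhs => rw [← hsplit]
        rw [Walk.support_append, hdrop]
        simp only [Walk.support_cons, Walk.support_nil, List.tail_cons]
        rw [List.reverse_append]
        have hxend : (P.1.takeUntil x hxs).support.reverse =
            x :: (P.1.takeUntil x hxs).support.reverse.tail := by
          rw [← Walk.support_reverse]
          exact ((P.1.takeUntil x hxs).reverse.support_eq_cons)
        rw [hxend]
        rfl
      have h2 : P.1.support.reverse = ℓ :: u :: q.support.tail := by
        rw [← Walk.support_reverse, hrev, Walk.support_cons]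
        conv_lhs => rw [q.support_eq_cons]
      rw [h2] at h1
      simp only [List.cons.injEq, true_and] at h1
      exact h1.1.symm
    · -- extend the path: contradiction with maximality
      exfalso
      have hpath : (Walk.cons hx.symm P.1.reverse).IsPath := by
        rw [Walk.cons_isPath_iff]
        refine ⟨P.2.reverse, ?_⟩
        rw [Walk.support_reverse, List.mem_reverse]
        exact hxs
      have := hmax ⟨x, ⟨(Walk.cons hx.symm P.1.reverse).reverse, hpath.reverse⟩⟩
      simp only [Walk.length_reverse, Walk.length_cons] at this
      omega
lemma tree_tour : ∀ (n : ℕ) {V : Type*} [Fintype V] [DecidableEq V] (T : SimpleGraph V), T.IsTree →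
    ∀ r : V, Fintype.card V ≤ n →
    ∃ p : T.Walk r r, (∀ v, v ∈ p.support) ∧ ∀ e, p.edges.count e ≤ 2 := by
  intro n
  induction n with
  | zero =>
    intro V _ _ T hT r hcard
    exfalso
    have : 0 < Fintype.card V := Fintype.card_pos_iff.mpr ⟨r⟩
    omega
  | succ n ih =>
    intro V _ _ T hT r hcard
    classical
    by_cases h1 : Fintype.card V ≤ 1
    · refine ⟨Walk.nil, ?_, ?_⟩
      · intro v
        have : v = r := Fintype.card_le_one_iff.mp h1 v r
        simp [this]
      · intro e
        simp
    · have hcard2 : 2 ≤ Fintype.card V := by omega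
      obtain ⟨ℓ, u, hℓr, hadj, hleaf⟩ := exists_leaf hT r hcard2
      set s : Set V := {v | v ≠ ℓ} with hs
      have hus : u ∈ s := hadj.ne'
      have hrs : r ∈ s := hℓr.symm
      have hcards : Fintype.card ↥s ≤ n := by
        have h2 : Fintype.card ↥s = Fintype.card V - 1 := by
          calc Fintype.card ↥s = Fintype.card {v : V // ¬ v = ℓ} :=
                Fintype.card_congr (Equiv.subtypeEquivRight (fun v => Iff.rfl))
            _ = Fintype.card V - Fintype.card {v : V // v = ℓ} :=
                Fintype.card_subtype_compl _
            _ = Fintype.card V - 1 := by rw [Fintype.card_subtype_eq]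
        omega
      set T' := T.induce s with hT'def
      have hconn' : T'.Connected := by
        haveI : Nonempty ↥s := ⟨⟨r, hrs⟩⟩
        refine ⟨fun a b => ?_⟩
        obtain ⟨a, ha⟩ := a
        obtain ⟨b, hb⟩ := b
        obtain ⟨p, hp, -⟩ := hT.existsUnique_path a b
        refine reachable_induce p ha hb ?_
        intro x hxsup
        by_contra hxs
        have hxℓ : x = ℓ := not_not.mp hxs
        subst hxℓ
        have hnd : (p.takeUntil x hxsup).edges.Disjoint (p.dropUntil x hxsup).edges := by
          have hnd' : p.edges.Nodup := hp.edges_nodup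
          conv at hnd' => rw [← p.take_spec hxsup]
          rw [Walk.edges_append] at hnd'
          exact (List.nodup_append'.mp hnd').2.2
        have he1 : s(x, u) ∈ (p.takeUntil x hxsup).edges := by
          cases hq1 : (p.takeUntil x hxsup).reverse with
          | nil => exact absurd rfl ha
          | @cons _ x₁ _ h₁ t₁ =>
            have hmem : s(x, x₁) ∈ (p.takeUntil x hxsup).reverse.edges := by
              rw [hq1, Walk.edges_cons]
              exact List.mem_cons_self
            rw [hleaf _ h₁] at hmem
            rwa [Walk.edges_reverse, List.mem_reverse] at hmem
        have he2 : s(x, u) ∈ (p.dropUntil x hxsup).edges := by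
          cases hq2 : (p.dropUntil x hxsup) with
          | nil => exact absurd rfl hb
          | @cons _ x₂ _ h₂ t₂ =>
            rw [Walk.edges_cons]
            have hx2 : s(x, x₂) = s(x, u) := by rw [hleaf _ h₂]
            rw [hx2]
            exact List.mem_cons_self
        exact hnd he1 he2
      have hacyc' : T'.IsAcyclic := by
        intro v c hc
        have hinj : Function.Injective (SimpleGraph.Embedding.induce (G := T) s).toHom := by
          intro a b hab
          exact Subtype.ext hab
        exact hT.IsAcyclic _
          ((SimpleGraph.Walk.map_isCycle_iff_of_injective hinj).mpr hc)
      obtain ⟨p', hp'cov, hp'cnt⟩ := ih T' ⟨hconn', hacyc'⟩ ⟨r, hrs⟩ hcards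
      set f := (SimpleGraph.Embedding.induce (G := T) s).toHom with hfdef
      have hfval : ∀ x : ↥s, f x = (x : V) := fun x => rfl
      set q : T.Walk r r := p'.map f with hqdef
      have hinj : Function.Injective (⇑f) := fun a b hab => Subtype.ext hab
      have hqsup : q.support = p'.support.map ⇑f := by
        exact Walk.support_map f p'
      have hℓq : ℓ ∉ q.support := by
        rw [hqsup]
        intro hmem
        obtain ⟨x, -, hfx⟩ := List.mem_map.mp hmem
        exact x.2 ((hfval x).symm.trans hfx)
      have huq : u ∈ q.support := by
        rw [hqsup]
        exact List.mem_map.mpr ⟨⟨u, hus⟩, hp'cov _, rfl⟩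
      have hqcnt : ∀ e, q.edges.count e ≤ 2 := by
        intro e
        by_cases he : e ∈ q.edges
        · rw [show q.edges = p'.edges.map (Sym2.map f) from Walk.edges_map f p'] at he ⊢
          obtain ⟨e', he', rfl⟩ := List.mem_map.mp he
          rw [List.count_map_of_injective _ _ (Sym2.map.injective hinj)]
          exact hp'cnt e'
        · rw [List.count_eq_zero_of_not_mem he]
          omega
      -- splice in the leaf
      set A := q.takeUntil u huq with hAdef
      set B := q.dropUntil u huq with hBdef
      refine ⟨A.append (Walk.cons hadj.symm (Walk.cons hadj B)), ?_, ?_⟩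
      · intro v
        by_cases hvℓ : v = ℓ
        · subst hvℓ
          rw [Walk.mem_support_append_iff]
          right
          rw [Walk.support_cons, Walk.support_cons]
          exact List.mem_cons_of_mem _ (List.mem_cons_self)
        · have hvq : v ∈ q.support := by
            rw [hqsup]
            exact List.mem_map.mpr ⟨⟨v, hvℓ⟩, hp'cov _, rfl⟩
          rw [← q.take_spec huq, Walk.mem_support_append_iff] at hvq
          rw [Walk.mem_support_append_iff]
          rcases hvq with h | h
          · exact Or.inl h
          · right
            rw [Walk.support_cons, Walk.support_cons]
            exact List.mem_cons_of_mem _ (List.mem_cons_of_mem _ h)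
      · intro e
        have hABq : A.edges.count e + B.edges.count e = q.edges.count e := by
          conv_rhs => rw [← q.take_spec huq]
          rw [Walk.edges_append, List.count_append]
        have hedges : (A.append (Walk.cons hadj.symm (Walk.cons hadj B))).edges
            = A.edges ++ (s(u, ℓ) :: s(ℓ, u) :: B.edges) := by
          rw [Walk.edges_append, Walk.edges_cons, Walk.edges_cons]
        rw [hedges, List.count_append, List.count_cons, List.count_cons]
        have hswap : s(ℓ, u) = s(u, ℓ) := Sym2.eq_swap
        by_cases heq : e = s(u, ℓ)
        · have hnotin : s(u, ℓ) ∉ q.edges := by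
            intro hmem
            exact hℓq (q.snd_mem_support_of_mem_edges hmem)
          have hq0 : q.edges.count e = 0 := by
            rw [heq]
            exact List.count_eq_zero_of_not_mem hnotin
          have hA0 : A.edges.count e = 0 := by omega
          have hB0 : B.edges.count e = 0 := by omega
          rw [hA0, hB0, hswap]
          subst heq
          simp
        · have hle2 : q.edges.count e ≤ 2 := hqcnt e
          rw [hswap, beq_eq_false_iff_ne.mpr (Ne.symm heq)]
          simp only [Bool.false_eq_true, if_false, add_zero]
          omega
noncomputable def marks {V : Type*} [DecidableEq V] {T : SimpleGraph V}
    (w : Sym2 V → ℝ) (d : V → ℝ) (ε : ℝ) : {a b : V} → ℝ → T.Walk a b → Finset V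
  | _, _, _, Walk.nil => ∅
  | a, _, B, Walk.cons (v := y) _ p =>
      if (1 + ε) * d y < B + w s(a, y) then insert y (marks w d ε (d y) p)
      else marks w d ε (B + w s(a, y)) p

lemma marks_weight {V : Type*} [DecidableEq V] {T : SimpleGraph V}
    (w : Sym2 V → ℝ) (d : V → ℝ) {ε : ℝ} (hε : 0 ≤ ε) (hd : ∀ v, 0 ≤ d v) :
    ∀ {a b : V} (p : T.Walk a b) (B : ℝ), 0 ≤ B → (∀ e ∈ p.edges, 0 ≤ w e) →
      ε * ∑ u ∈ marks w d ε B p, d u ≤ B + walkWeight w p := by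
  intro a b p
  induction p with
  | nil =>
    intro B hB _
    simp only [marks, Finset.sum_empty, mul_zero, walkWeight_nil, add_zero]
    exact hB
  | @cons a y b h p ih =>
    intro B hB hw
    have hwe : 0 ≤ w s(a, y) := hw _ (by simp)
    have hw' : ∀ e ∈ p.edges, 0 ≤ w e := fun e he => hw e (by simp [he])
    rw [walkWeight_cons]
    simp only [marks]
    by_cases hif : (1 + ε) * d y < B + w s(a, y)
    · rw [if_pos hif]
      by_cases hmem : y ∈ marks w d ε (d y) p
      · rw [Finset.insert_eq_self.mpr hmem]
        have := ih (d y) (hd y) hw'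
        have h2 : d y ≤ (1 + ε) * d y := by nlinarith [hd y]
        linarith
      · rw [Finset.sum_insert hmem]
        have := ih (d y) (hd y) hw'
        have h2 : ε * d y + d y = (1 + ε) * d y := by ring
        have h3 : ε * (d y + ∑ u ∈ marks w d ε (d y) p, d u)
            = ε * d y + ε * ∑ u ∈ marks w d ε (d y) p, d u := by ring
        linarith
    · rw [if_neg hif]
      have := ih (B + w s(a, y)) (by linarith) hw'
      linarith

lemma marks_cover {V : Type*} [DecidableEq V] {T H : SimpleGraph V} (hTH : T ≤ H)
    (w : Sym2 V → ℝ) (d : V → ℝ) {ε : ℝ} (hε : 0 ≤ ε) (hd : ∀ v, 0 ≤ d v) (rt : V) :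
    ∀ {a b : V} (p : T.Walk a b) (B : ℝ),
      (∀ u ∈ marks w d ε B p, ∃ q : H.Walk rt u, walkWeight w q ≤ d u) →
      (∃ q : H.Walk rt a, walkWeight w q ≤ B) → B ≤ (1 + ε) * d a →
      ∀ y ∈ p.support, ∃ q : H.Walk rt y, walkWeight w q ≤ (1 + ε) * d y := by
  intro a b p
  induction p with
  | nil =>
    intro B _ hqa hBa y hy
    rw [Walk.support_nil, List.mem_singleton] at hy
    subst hy
    obtain ⟨q, hq⟩ := hqa
    exact ⟨q, le_trans hq hBa⟩
  | @cons a c b h p ih =>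
    intro B hmark hqa hBa y hy
    rw [Walk.support_cons, List.mem_cons] at hy
    rcases hy with rfl | hy
    · obtain ⟨q, hq⟩ := hqa
      exact ⟨q, le_trans hq hBa⟩
    · simp only [marks] at hmark
      by_cases hif : (1 + ε) * d c < B + w s(a, c)
      · rw [if_pos hif] at hmark
        have hc := hmark c (Finset.mem_insert_self _ _)
        refine ih (d c) ?_ hc ?_ y hy
        · intro u hu
          exact hmark u (Finset.mem_insert_of_mem hu)
        · nlinarith [hd c]
      · rw [if_neg hif] at hmark
        push_neg at hif
        obtain ⟨q, hq⟩ := hqa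
        refine ih (B + w s(a, c)) hmark ⟨q.append (Walk.cons (hTH h) Walk.nil), ?_⟩ hif y hy
        rw [walkWeight_append, walkWeight_cons, walkWeight_nil]
        linarith

lemma finset_sum_biUnion_le {α β : Type*} [DecidableEq β] (s : Finset α) (t : α → Finset β)
    (f : β → ℝ) (hf : ∀ a ∈ s, ∀ b ∈ t a, 0 ≤ f b) :
    ∑ b ∈ s.biUnion t, f b ≤ ∑ a ∈ s, ∑ b ∈ t a, f b := by
  classical
  induction s using Finset.induction_on with
  | empty => simp
  | @insert a s ha ih =>
    rw [Finset.biUnion_insert, Finset.sum_insert ha]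
    have ih' := ih (fun a' ha' b hb => hf a' (Finset.mem_insert_of_mem ha') b hb)
    calc ∑ b ∈ t a ∪ s.biUnion t, f b
        ≤ ∑ b ∈ t a, f b + ∑ b ∈ s.biUnion t, f b := by
          have := Finset.sum_union_inter (s₁ := t a) (s₂ := s.biUnion t) (f := f)
          have h0 : 0 ≤ ∑ b ∈ t a ∩ s.biUnion t, f b := Finset.sum_nonneg fun b hb =>
            hf a (Finset.mem_insert_self _ _) b (Finset.mem_of_mem_inter_left hb)
          linarith
      _ ≤ ∑ b ∈ t a, f b + ∑ a ∈ s, ∑ b ∈ t a, f b := by linarith [ih']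

lemma graphWeight_mono {V : Type*} [Fintype V] {A B : SimpleGraph V} (hAB : A ≤ B)
    (w : Sym2 V → ℝ) (hw : ∀ e ∈ B.edgeSet, 0 ≤ w e) :
    graphWeight A w ≤ graphWeight B w := by
  apply Finset.sum_le_sum_of_subset_of_nonneg
  · intro e he
    rw [Set.Finite.mem_toFinset] at he ⊢
    exact SimpleGraph.edgeSet_mono hAB he
  · intro e he _
    exact hw e ((Set.Finite.mem_toFinset _).mp he)
end SLT

/-- `T` is a minimum spanning tree of `G` w.r.t. the weights `w`. -/
def IsMST {V : Type*} [Fintype V] (G T : SimpleGraph V) (w : Sym2 V → ℝ) : Prop :=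
  T ≤ G ∧ T.IsTree ∧
    ∀ T' : SimpleGraph V, T' ≤ G → T'.IsTree → graphWeight T w ≤ graphWeight T' w

open SLT SimpleGraph

/-- existence of a `(1+ε, 1+c/ε)`-shallow-light tree: a spanning tree
approximating all distances from the root `rt` to within `1+ε`, whose total weight is
at most `(1+c/ε)` times that of a minimum spanning tree. -/
theorem shallow_light_tree_exists :
    ∃ c : ℝ, 0 < c ∧
      ∀ (V : Type*) [Fintype V] (G : SimpleGraph V) (w : Sym2 V → ℝ),
        G.Connected → (∀ e ∈ G.edgeSet, 0 < w e) →
        ∀ rt : V, ∀ ε : ℝ, 0 < ε → ε < 1 →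
        ∀ T : SimpleGraph V, IsMST G T w →
        ∃ T' : SimpleGraph V, T' ≤ G ∧ T'.IsTree ∧
          (∀ v : V, gdist T' w rt v ≤ (1 + ε) * gdist G w rt v) ∧
          graphWeight T' w ≤ (1 + c / ε) * graphWeight T w := by
  refine ⟨2, by norm_num, ?_⟩
  intro V _ G w hconn hw rt ε hε0 hε1 T hMST
  classical
  obtain ⟨hTG, hTtree, -⟩ := hMST
  have hw0 : ∀ e ∈ G.edgeSet, 0 ≤ w e := fun e he => (hw e he).le
  set d : V → ℝ := fun v => gdist G w rt v with hd
  have hd0 : ∀ v, 0 ≤ d v := fun v => gdist_nonneg hw0 (hconn.preconnected rt v)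
  have hattain : ∀ v, ∃ p : G.Walk rt v, p.IsPath ∧ walkWeight w p = d v :=
    fun v => exists_attaining_path hw0 (hconn.preconnected rt v)
  choose P hPpath hPw using hattain
  obtain ⟨tour, htourcov, htourcnt⟩ := tree_tour (Fintype.card V) T hTtree rt le_rfl
  set M := marks (T := T) w d ε 0 tour with hM
  set H : SimpleGraph V :=
    T ⊔ SimpleGraph.fromEdgeSet ↑(M.biUnion fun u => (P u).edges.toFinset) with hH
  have hTH : T ≤ H := le_sup_left
  have hHG : H ≤ G := by
    rw [hH]
    apply sup_le hTG
    intro a b hab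
    rw [SimpleGraph.fromEdgeSet_adj] at hab
    obtain ⟨hmem, hne⟩ := hab
    obtain ⟨u, hu, he⟩ := Finset.mem_biUnion.mp (Finset.mem_coe.mp hmem)
    exact (P u).edges_subset_edgeSet (List.mem_toFinset.mp he)
  have hwH : ∀ e ∈ H.edgeSet, 0 < w e := fun e he => hw e (edgeSet_mono hHG he)
  have hHconn : H.Connected := hTtree.isConnected.mono hTH
  have hmark : ∀ u ∈ M, ∃ q : H.Walk rt u, walkWeight w q ≤ d u := by
    intro u hu
    have hedge : ∀ e ∈ (P u).edges, e ∈ H.edgeSet := by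
      intro e he
      rw [hH, SimpleGraph.edgeSet_sup]
      right
      rw [SimpleGraph.edgeSet_fromEdgeSet]
      refine ⟨?_, ?_⟩
      · exact Finset.mem_coe.mpr (Finset.mem_biUnion.mpr ⟨u, hu, List.mem_toFinset.mpr he⟩)
      · exact G.not_isDiag_of_mem_edgeSet ((P u).edges_subset_edgeSet he)
    refine ⟨(P u).transfer H hedge, ?_⟩
    have he' : ((P u).transfer H hedge).edges = (P u).edges := Walk.edges_transfer _ _
    rw [walkWeight, he', ← walkWeight, hPw]
  have hcover : ∀ v, ∃ q : H.Walk rt v, walkWeight w q ≤ (1 + ε) * d v := by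
    intro v
    refine marks_cover hTH w d hε0.le hd0 rt tour 0 hmark ⟨Walk.nil, by simp⟩ ?_ v (htourcov v)
    exact mul_nonneg (by linarith) (hd0 rt)
  obtain ⟨T'', hT''H, hT''tree, hT''walk⟩ := spt_exists H w hHconn hwH rt
  have hT''G : T'' ≤ G := le_trans hT''H hHG
  refine ⟨T'', hT''G, hT''tree, ?_, ?_⟩
  · intro v
    obtain ⟨q, hq⟩ := hT''walk v
    obtain ⟨q', hq'⟩ := hcover v
    have h1 : gdist T'' w rt v ≤ walkWeight w q :=
      gdist_le (fun e he => hw0 e (edgeSet_mono hT''G he)) q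
    have h2 : gdist H w rt v ≤ walkWeight w q' :=
      gdist_le (fun e he => hw0 e (edgeSet_mono hHG he)) q'
    calc gdist T'' w rt v ≤ walkWeight w q := h1
      _ ≤ gdist H w rt v := hq
      _ ≤ (1 + ε) * d v := le_trans h2 hq'
  · -- weight bound
    set FT := T.edgeSet.toFinite.toFinset with hFT
    set FE := M.biUnion (fun u => (P u).edges.toFinset) with hFE
    have htw : walkWeight w tour ≤ 2 * graphWeight T w := by
      have hsub : tour.edges.toFinset ⊆ FT := by
        intro e he
        rw [hFT, Set.Finite.mem_toFinset]
        exact tour.edges_subset_edgeSet (List.mem_toFinset.mp he)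
      have hTnonneg : ∀ e ∈ FT, 0 ≤ w e := by
        intro e he
        rw [hFT, Set.Finite.mem_toFinset] at he
        exact hw0 e (edgeSet_mono hTG he)
      calc walkWeight w tour
          = ∑ e ∈ tour.edges.toFinset, tour.edges.count e • w e :=
            Finset.sum_list_map_count _ _
        _ ≤ ∑ e ∈ tour.edges.toFinset, 2 * w e := by
            apply Finset.sum_le_sum
            intro e he
            have h0 : 0 ≤ w e := hTnonneg e (hsub he)
            have hc := htourcnt e
            calc tour.edges.count e • w e = (tour.edges.count e : ℝ) * w e :=
                  nsmul_eq_mul _ _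
              _ ≤ 2 * w e := by
                  apply mul_le_mul_of_nonneg_right _ h0
                  exact_mod_cast hc
        _ ≤ ∑ e ∈ FT, 2 * w e := by
            apply Finset.sum_le_sum_of_subset_of_nonneg hsub
            intro e he _
            have := hTnonneg e he
            linarith
        _ = 2 * graphWeight T w := by
            rw [graphWeight, Finset.mul_sum]
    have hsum : ε * ∑ u ∈ M, d u ≤ walkWeight w tour := by
      have := marks_weight w d hε0.le hd0 tour 0 le_rfl
        (fun e he => hw0 e (edgeSet_mono hTG (tour.edges_subset_edgeSet he)))
      simpa using this
    have hMsum : ∑ u ∈ M, d u ≤ 2 / ε * graphWeight T w := by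
      rw [div_mul_eq_mul_div, le_div_iff₀ hε0]
      nlinarith [hsum, htw]
    have h1 : graphWeight T'' w ≤ graphWeight H w :=
      graphWeight_mono hT''H w (fun e he => hw0 e (edgeSet_mono hHG he))
    have hFEnonneg : ∀ u ∈ M, ∀ e ∈ (P u).edges.toFinset, 0 ≤ w e := by
      intro u _ e he
      exact hw0 e ((P u).edges_subset_edgeSet (List.mem_toFinset.mp he))
    have h2 : graphWeight H w ≤ graphWeight T w + ∑ u ∈ M, d u := by
      have hsub2 : H.edgeSet.toFinite.toFinset ⊆ FT ∪ FE := by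
        intro e he
        rw [Set.Finite.mem_toFinset, hH, SimpleGraph.edgeSet_sup] at he
        rcases he with he | he
        · exact Finset.mem_union_left _ ((Set.Finite.mem_toFinset _).mpr he)
        · rw [SimpleGraph.edgeSet_fromEdgeSet] at he
          exact Finset.mem_union_right _ (Finset.mem_coe.mp he.1)
      have hnonneg : ∀ e ∈ FT ∪ FE, 0 ≤ w e := by
        intro e he
        rcases Finset.mem_union.mp he with he | he
        · rw [hFT, Set.Finite.mem_toFinset] at he
          exact hw0 e (edgeSet_mono hTG he)
        · obtain ⟨u, hu, he'⟩ := Finset.mem_biUnion.mp he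
          exact hw0 e ((P u).edges_subset_edgeSet (List.mem_toFinset.mp he'))
      calc graphWeight H w ≤ ∑ e ∈ FT ∪ FE, w e := by
            apply Finset.sum_le_sum_of_subset_of_nonneg hsub2
            intro e he _
            exact hnonneg e he
        _ ≤ ∑ e ∈ FT, w e + ∑ e ∈ FE, w e := by
            have := Finset.sum_union_inter (s₁ := FT) (s₂ := FE) (f := w)
            have h0 : 0 ≤ ∑ e ∈ FT ∩ FE, w e := Finset.sum_nonneg fun e he =>
              hnonneg e (Finset.mem_union_left _ (Finset.mem_of_mem_inter_left he))
            linarith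
        _ ≤ graphWeight T w + ∑ u ∈ M, ∑ e ∈ (P u).edges.toFinset, w e := by
            have := finset_sum_biUnion_le M (fun u => (P u).edges.toFinset) w hFEnonneg
            rw [graphWeight]
            linarith
        _ = graphWeight T w + ∑ u ∈ M, d u := by
            congr 1
            apply Finset.sum_congr rfl
            intro u _
            rw [List.sum_toFinset _ (hPpath u).edges_nodup, ← walkWeight, hPw]
    have hgT : 0 ≤ graphWeight T w := by
      apply Finset.sum_nonneg
      intro e he
      exact hw0 e (edgeSet_mono hTG ((Set.Finite.mem_toFinset _).mp he))
    have hfinal : (2 / ε) * graphWeight T w = 2 / ε * graphWeight T w := rfl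
    calc graphWeight T'' w ≤ graphWeight H w := h1
      _ ≤ graphWeight T w + ∑ u ∈ M, d u := h2
      _ ≤ graphWeight T w + 2 / ε * graphWeight T w := by linarith
      _ = (1 + 2 / ε) * graphWeight T w := by ring
end

section
/- There exists a universal constant c > 0 such that for every finite connected weighted simple graph G = (V,E,w) with positive edge weights, every root vertex rt ∈ V, and every real γ ∈ (0,1), there exists a spanning tree T' of G such that w(T') ≤ (1+γ)·w(T), where T is a minimum spanning tree of G, and d_{T'}(rt,v) ≤ (c/γ)·d_G(rt,v) for every vertex v. -/
set_option linter.unusedSectionVars false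
set_option linter.unusedVariables false

section Basic
variable {V : Type*} {G : SimpleGraph V} {w : Sym2 V → ℝ}

@[simp] lemma walkWeight_nil {u : V} : walkWeight w (SimpleGraph.Walk.nil : G.Walk u u) = 0 := by
  simp [walkWeight]

@[simp] lemma walkWeight_cons {u v x : V} (h : G.Adj u v) (p : G.Walk v x) :
    walkWeight w (SimpleGraph.Walk.cons h p) = w s(u, v) + walkWeight w p := by
  simp [walkWeight, List.sum_reverse]

@[simp] lemma walkWeight_append {u v x : V} (p : G.Walk u v) (q : G.Walk v x) :
    walkWeight w (p.append q) = walkWeight w p + walkWeight w q := by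
  simp [walkWeight]

@[simp] lemma walkWeight_transfer {u v : V} (p : G.Walk u v) (H : SimpleGraph V)
    (hp : ∀ e ∈ p.edges, e ∈ H.edgeSet) :
    walkWeight w (p.transfer H hp) = walkWeight w p := by
  simp [walkWeight]

@[simp] lemma walkWeight_reverse {u v : V} (p : G.Walk u v) :
    walkWeight w p.reverse = walkWeight w p := by
  simp [walkWeight, List.sum_reverse]

variable (hw : ∀ e ∈ G.edgeSet, 0 ≤ w e)
include hw

lemma walkWeight_nonneg {u v : V} (p : G.Walk u v) : 0 ≤ walkWeight w p := by
  apply List.sum_nonneg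
  intro x hx
  rcases List.mem_map.mp hx with ⟨e, he, rfl⟩
  exact hw e (p.edges_subset_edgeSet he)

lemma gdist_nonneg {u v : V} : 0 ≤ gdist G w u v := by
  apply Real.sInf_nonneg
  rintro x ⟨p, rfl⟩
  exact walkWeight_nonneg hw p

lemma gdist_le {u v : V} (p : G.Walk u v) : gdist G w u v ≤ walkWeight w p :=
  csInf_le ⟨0, by rintro x ⟨q, rfl⟩; exact walkWeight_nonneg hw q⟩ ⟨p, rfl⟩

lemma gdist_self (u : V) : gdist G w u u = 0 :=
  le_antisymm (by simpa using gdist_le hw (SimpleGraph.Walk.nil : G.Walk u u))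
    (gdist_nonneg hw)

lemma gdist_le_gdist_add_walk {u v m : V} (hne : Nonempty (G.Walk u v))
    (q : G.Walk v m) : gdist G w u m ≤ gdist G w u v + walkWeight w q := by
  rw [← sub_le_iff_le_add]
  have hne' : {x : ℝ | ∃ p : G.Walk u v, walkWeight w p = x}.Nonempty :=
    hne.elim fun p => ⟨walkWeight w p, p, rfl⟩
  apply le_csInf hne'
  rintro x ⟨p, rfl⟩
  rw [sub_le_iff_le_add]
  have := gdist_le hw (p.append q)
  rw [walkWeight_append] at this
  linarith

end Basic

section Comm
variable {V : Type*} {G : SimpleGraph V} {w : Sym2 V → ℝ}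

lemma gdist_comm (u v : V) : gdist G w u v = gdist G w v u := by
  unfold gdist
  congr 1
  ext x
  constructor <;> rintro ⟨p, rfl⟩ <;> exact ⟨p.reverse, by simp⟩

end Comm

section Lists
variable {α : Type*} [DecidableEq α] {w : α → ℝ}

lemma list_sum_le_of_subperm {l₁ l₂ : List α} (h : List.Subperm l₁ l₂)
    (hw : ∀ e ∈ l₂, 0 ≤ w e) : (l₁.map w).sum ≤ (l₂.map w).sum := by
  rcases h with ⟨l, hperm, hsub⟩
  have h1 : (l₁.map w).sum = (l.map w).sum := (hperm.map w).sum_eq.symm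
  rw [h1]
  refine (hsub.map w).sum_le_sum ?_
  intro x hx
  rcases List.mem_map.mp hx with ⟨e, he, rfl⟩
  exact hw e he

lemma finset_sum_le_list_sum (l : List α) (hw : ∀ e ∈ l, 0 ≤ w e) :
    ∑ e ∈ l.toFinset, w e ≤ (l.map w).sum := by
  rw [Finset.sum_list_map_count]
  apply Finset.sum_le_sum
  intro e he
  rw [List.mem_toFinset] at he
  have h1 : 1 ≤ l.count e := List.count_pos_iff.mpr he
  have h0 : 0 ≤ w e := hw e he
  calc w e = 1 * w e := by ring
    _ ≤ (l.count e : ℝ) * w e := by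
        apply mul_le_mul_of_nonneg_right _ h0
        exact_mod_cast h1
    _ = l.count e • w e := by simp [nsmul_eq_mul]

lemma list_sum_le_two_mul_finset_sum (l : List α) (s : Finset α)
    (hsub : ∀ e ∈ l, e ∈ s) (hcount : ∀ e, l.count e ≤ 2)
    (hw : ∀ e ∈ s, 0 ≤ w e) : (l.map w).sum ≤ 2 * ∑ e ∈ s, w e := by
  rw [Finset.sum_list_map_count]
  have hsub' : l.toFinset ⊆ s := fun e he => hsub e (List.mem_toFinset.mp he)
  calc ∑ e ∈ l.toFinset, l.count e • w e ≤ ∑ e ∈ l.toFinset, 2 * w e := by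
        apply Finset.sum_le_sum
        intro e he
        rw [nsmul_eq_mul]
        apply mul_le_mul_of_nonneg_right _ (hw e (hsub' he))
        exact_mod_cast hcount e
    _ ≤ ∑ e ∈ s, 2 * w e := by
        apply Finset.sum_le_sum_of_subset_of_nonneg hsub'
        intro e he _
        have := hw e he
        linarith
    _ = 2 * ∑ e ∈ s, w e := by rw [Finset.mul_sum]

lemma finset_sum_union_le (s t : Finset α) (hw : ∀ e ∈ s ∪ t, 0 ≤ w e) :
    ∑ e ∈ s ∪ t, w e ≤ ∑ e ∈ s, w e + ∑ e ∈ t, w e := by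
  have := Finset.sum_union_inter (s₁ := s) (s₂ := t) (f := w)
  have h2 : 0 ≤ ∑ e ∈ s ∩ t, w e := Finset.sum_nonneg fun e he =>
    hw e (Finset.mem_union_left _ (Finset.mem_of_mem_inter_left he))
  linarith

lemma finset_sum_biUnion_le {β : Type*} [DecidableEq β] (s : Finset β) (t : β → Finset α)
    (hw : ∀ b ∈ s, ∀ e ∈ t b, 0 ≤ w e) :
    ∑ e ∈ s.biUnion t, w e ≤ ∑ b ∈ s, ∑ e ∈ t b, w e := by
  induction s using Finset.induction_on with
  | empty => simp
  | @insert b s hb ih =>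
      rw [Finset.biUnion_insert, Finset.sum_insert hb]
      have ih' := ih (fun b' hb' e he => hw b' (Finset.mem_insert_of_mem hb') e he)
      have hun : ∀ e ∈ t b ∪ s.biUnion t, 0 ≤ w e := by
        intro e he
        rcases Finset.mem_union.mp he with he | he
        · exact hw b (Finset.mem_insert_self _ _) e he
        · obtain ⟨b', hb', he'⟩ := Finset.mem_biUnion.mp he
          exact hw b' (Finset.mem_insert_of_mem hb') e he'
      calc ∑ e ∈ t b ∪ s.biUnion t, w e ≤ ∑ e ∈ t b, w e + ∑ e ∈ s.biUnion t, w e :=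
            finset_sum_union_le _ _ hun
        _ ≤ _ := by linarith

end Lists

section Attain
variable {V : Type*} [Fintype V] {G : SimpleGraph V} {w : Sym2 V → ℝ}

lemma exists_shortest_walk (hw : ∀ e ∈ G.edgeSet, 0 ≤ w e) {u v : V}
    (hr : G.Reachable u v) : ∃ p : G.Walk u v, walkWeight w p = gdist G w u v := by
  classical
  have hne : (Finset.univ : Finset (G.Path u v)).Nonempty := by
    obtain ⟨q⟩ := hr
    exact ⟨q.toPath, Finset.mem_univ _⟩
  obtain ⟨p₀, -, hp₀⟩ := Finset.exists_min_image Finset.univ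
    (fun p : G.Path u v => walkWeight w p.val) hne
  refine ⟨p₀.val, le_antisymm ?_ (gdist_le hw _)⟩
  have hne2 : {x : ℝ | ∃ p : G.Walk u v, walkWeight w p = x}.Nonempty :=
    ⟨walkWeight w p₀.val, p₀.val, rfl⟩
  apply le_csInf hne2
  rintro x ⟨q, rfl⟩
  calc walkWeight w p₀.val ≤ walkWeight w (⟨q.bypass, q.bypass_isPath⟩ : G.Path u v).val :=
        hp₀ _ (Finset.mem_univ _)
    _ ≤ walkWeight w q := by
        apply list_sum_le_of_subperm
        · apply List.Nodup.subperm
          · exact q.bypass_isPath.isTrail.edges_nodup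
          · exact fun e he => q.edges_bypass_subset he
        · exact fun e he => hw e (q.edges_subset_edgeSet he)

end Attain

section Tour
variable {V : Type*} {G : SimpleGraph V}

open SimpleGraph Walk

lemma tour_helper {rt : V} (W : G.Walk rt rt) {a c : V} (R : G.Walk a c) :
    R.edges.Nodup → c ∈ W.support →
    ∃ (u : V) (hu : u ∈ W.support) (D : G.Walk u a),
      D.edges.Nodup ∧ (∀ e ∈ D.edges, e ∉ W.edges) ∧ (∀ e ∈ D.edges, e ∈ R.edges) := by
  classical
  induction R with
  | nil =>
      intro _ hc
      exact ⟨_, hc, SimpleGraph.Walk.nil, by simp, by simp, by simp⟩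
  | @cons a a₂ c' h q ih =>
      intro hnd hc
      by_cases ha : a ∈ W.support
      · exact ⟨a, ha, SimpleGraph.Walk.nil, by simp, by simp, by simp⟩
      · rw [SimpleGraph.Walk.edges_cons, List.nodup_cons] at hnd
        obtain ⟨u, hu, D₂, hD₂nd, hD₂fresh, hD₂sub⟩ := ih hnd.2 hc
        refine ⟨u, hu, D₂.append (SimpleGraph.Walk.cons h.symm SimpleGraph.Walk.nil),
          ?_, ?_, ?_⟩
        · rw [SimpleGraph.Walk.edges_append]
          simp only [SimpleGraph.Walk.edges_cons, SimpleGraph.Walk.edges_nil]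
          rw [List.nodup_append]
          refine ⟨hD₂nd, by simp, ?_⟩
          intro e he
          simp only [List.mem_singleton, List.mem_cons, List.not_mem_nil, or_false]
          intro _ hb heq
          subst hb heq
          have : s(a₂, a) ∈ q.edges := hD₂sub _ he
          rw [Sym2.eq_swap] at this
          exact hnd.1 this
        · intro e he
          rw [SimpleGraph.Walk.edges_append] at he
          rcases List.mem_append.mp he with he | he
          · exact hD₂fresh e he
          · simp only [SimpleGraph.Walk.edges_cons, SimpleGraph.Walk.edges_nil,
              List.mem_singleton, List.mem_cons, List.not_mem_nil, or_false] at he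
            subst he
            intro hmem
            exact ha (W.snd_mem_support_of_mem_edges hmem)
        · intro e he
          rw [SimpleGraph.Walk.edges_append] at he
          rw [SimpleGraph.Walk.edges_cons]
          rcases List.mem_append.mp he with he | he
          · exact List.mem_cons_of_mem _ (hD₂sub e he)
          · simp only [SimpleGraph.Walk.edges_cons, SimpleGraph.Walk.edges_nil,
              List.mem_singleton, List.mem_cons, List.not_mem_nil, or_false] at he
            subst he
            rw [Sym2.eq_swap]
            exact List.mem_cons_self

lemma exists_tour [Fintype V] [DecidableEq V] (hconn : G.Connected) (rt : V) :
    ∃ W : G.Walk rt rt, (∀ v : V, v ∈ W.support) ∧ ∀ e, W.edges.count e ≤ 2 := by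
  classical
  suffices h : ∀ S : Finset V, ∃ W : G.Walk rt rt,
      (∀ v ∈ S, v ∈ W.support) ∧ ∀ e, W.edges.count e ≤ 2 by
    obtain ⟨W, h1, h2⟩ := h Finset.univ
    exact ⟨W, fun v => h1 v (Finset.mem_univ v), h2⟩
  intro S
  induction S using Finset.induction_on with
  | empty => exact ⟨SimpleGraph.Walk.nil, by simp, by simp⟩
  | @insert v S hv ihS =>
      obtain ⟨W, hW1, hW2⟩ := ihS
      by_cases hvW : v ∈ W.support
      · exact ⟨W, fun s hs => by
          rcases Finset.mem_insert.mp hs with rfl | hs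
          · exact hvW
          · exact hW1 s hs, hW2⟩
      · obtain ⟨p⟩ := hconn rt v
        have hpath := p.bypass_isPath
        have hndR : (p.bypass.reverse).edges.Nodup := by
          rw [SimpleGraph.Walk.edges_reverse, List.nodup_reverse]
          exact hpath.isTrail.edges_nodup
        obtain ⟨u, hu, D, hDnd, hDfresh, -⟩ := tour_helper W p.bypass.reverse hndR W.start_mem_support
        refine ⟨(W.takeUntil u hu).append ((D.append D.reverse).append (W.dropUntil u hu)),
          ?_, ?_⟩
        · intro s hs
          rw [SimpleGraph.Walk.mem_support_append_iff,
            SimpleGraph.Walk.mem_support_append_iff]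
          rcases Finset.mem_insert.mp hs with rfl | hs
          · right; left
            rw [SimpleGraph.Walk.mem_support_append_iff]
            left
            exact D.end_mem_support
          · have := hW1 s hs
            conv at this => rw [← W.take_spec hu]
            rw [SimpleGraph.Walk.mem_support_append_iff] at this
            rcases this with h | h
            · exact Or.inl h
            · exact Or.inr (Or.inr h)
        · intro e
          have hWe : W.edges = (W.takeUntil u hu).edges ++ (W.dropUntil u hu).edges := by
            conv_lhs => rw [← W.take_spec hu]
            rw [SimpleGraph.Walk.edges_append]
          simp only [SimpleGraph.Walk.edges_append, List.count_append]
          by_cases heD : e ∈ D.edges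
          · have h0 : W.edges.count e = 0 := List.count_eq_zero.mpr (hDfresh e heD)
            rw [hWe, List.count_append] at h0
            have h1 : D.edges.count e = 1 := List.count_eq_one_of_mem hDnd heD
            have h2 : D.reverse.edges.count e = 1 := by
              rw [SimpleGraph.Walk.edges_reverse, List.count_reverse]
              exact h1
            omega
          · have h1 : D.edges.count e = 0 := List.count_eq_zero.mpr heD
            have h2 : D.reverse.edges.count e = 0 := by
              rw [SimpleGraph.Walk.edges_reverse, List.count_reverse]
              exact h1
            have := hW2 e
            rw [hWe, List.count_append] at this
            omega

end Tour

section SPT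
variable {V : Type*} [Fintype V]

lemma exists_spt (H : SimpleGraph V) (w : Sym2 V → ℝ) (hconn : H.Connected)
    (hw : ∀ e ∈ H.edgeSet, 0 < w e) (rt : V) :
    ∃ T' : SimpleGraph V, T' ≤ H ∧ T'.IsTree ∧
      ∀ v : V, gdist T' w rt v ≤ gdist H w rt v := by
  classical
  have hw0 : ∀ e ∈ H.edgeSet, 0 ≤ w e := fun e he => (hw e he).le
  set f : V → ℝ := gdist H w rt with hf
  have hfrt : f rt = 0 := gdist_self hw0 rt
  have hpar : ∀ v, v ≠ rt → ∃ u, H.Adj u v ∧ f u + w s(u, v) ≤ f v ∧ f u < f v := by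
    intro v hv
    obtain ⟨p, hp⟩ := exists_shortest_walk hw0 (hconn rt v)
    have hnil : ¬ p.reverse.Nil := SimpleGraph.Walk.not_nil_of_ne hv
    obtain ⟨u, hadj, q, hq⟩ := SimpleGraph.Walk.not_nil_iff.mp hnil
    have hWq : w s(v, u) + walkWeight w q = f v := by
      rw [hf, ← hp, ← walkWeight_reverse p, hq, walkWeight_cons]
    have hfu : f u ≤ walkWeight w q := by
      rw [hf, gdist_comm]
      exact gdist_le hw0 q
    have hpos : 0 < w s(v, u) := hw _ ((H.mem_edgeSet).mpr hadj)
    refine ⟨u, hadj.symm, ?_, ?_⟩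
    · rw [Sym2.eq_swap]; linarith
    · linarith
  set par : V → V := fun v => if h : v = rt then rt else Classical.choose (hpar v h) with hpardef
  have hparspec : ∀ v, v ≠ rt →
      H.Adj (par v) v ∧ f (par v) + w s(par v, v) ≤ f v ∧ f (par v) < f v := by
    intro v hv
    have := Classical.choose_spec (hpar v hv)
    simp only [hpardef, dif_neg hv]
    exact this
  set T' : SimpleGraph V := SimpleGraph.fromEdgeSet {e | ∃ v, v ≠ rt ∧ e = s(v, par v)}
    with hT'def
  have hchar : ∀ a b : V, T'.Adj a b ↔ ((a ≠ rt ∧ par a = b) ∨ (b ≠ rt ∧ par b = a)) := by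
    intro a b
    rw [hT'def, SimpleGraph.fromEdgeSet_adj]
    constructor
    · rintro ⟨⟨v, hv, he⟩, hne⟩
      rw [Sym2.eq_iff] at he
      rcases he with ⟨h1, h2⟩ | ⟨h1, h2⟩
      · left
        subst h1
        exact ⟨hv, h2.symm⟩
      · right
        subst h2
        exact ⟨hv, h1.symm⟩
    · intro h
      rcases h with ⟨ha, hb⟩ | ⟨hb, ha⟩
      · exact ⟨⟨a, ha, by rw [hb]⟩, fun heq => (hparspec a ha).1.ne (hb.trans heq.symm)⟩
      · exact ⟨⟨b, hb, by rw [ha, Sym2.eq_swap]⟩,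
          fun heq => (hparspec b hb).1.ne (ha.trans heq)⟩
  have hT'le : T' ≤ H := by
    intro a b hab
    rcases (hchar a b).mp hab with ⟨ha, hb⟩ | ⟨hb, ha⟩
    · exact hb ▸ ((hparspec a ha).1).symm
    · exact ha ▸ (hparspec b hb).1
  have hw0' : ∀ e ∈ T'.edgeSet, 0 ≤ w e := fun e he =>
    hw0 e (SimpleGraph.edgeSet_mono hT'le he)
  -- key: walks to the root
  have key : ∀ n : ℕ, ∀ v : V,
      (Finset.univ.filter (fun u => f u < f v)).card ≤ n →
      ∃ p : T'.Walk rt v, walkWeight w p ≤ f v := by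
    intro n
    induction n with
    | zero =>
        intro v hv
        by_cases hvrt : v = rt
        · subst hvrt; exact ⟨SimpleGraph.Walk.nil, by simp [hfrt]⟩
        · exfalso
          obtain ⟨-, -, hlt⟩ := hparspec v hvrt
          have : par v ∈ Finset.univ.filter (fun u => f u < f v) := by
            simp [hlt]
          have := Finset.card_pos.mpr ⟨_, this⟩
          omega
    | succ n ih =>
        intro v hv
        by_cases hvrt : v = rt
        · subst hvrt; exact ⟨SimpleGraph.Walk.nil, by simp [hfrt]⟩
        · obtain ⟨hadj, hwle, hlt⟩ := hparspec v hvrt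
          have hsub : (Finset.univ.filter (fun u => f u < f (par v))) ⊂
              (Finset.univ.filter (fun u => f u < f v)) := by
            apply Finset.ssubset_iff_of_subset ?_ |>.mpr
            · exact ⟨par v, by simp [hlt], by simp⟩
            · intro x hx
              simp only [Finset.mem_filter, Finset.mem_univ, true_and] at hx ⊢
              linarith
          have hcard : (Finset.univ.filter (fun u => f u < f (par v))).card ≤ n := by
            have := Finset.card_lt_card hsub
            omega
          obtain ⟨p, hp⟩ := ih (par v) hcard
          have hadj' : T'.Adj (par v) v := (hchar (par v) v).mpr (Or.inr ⟨hvrt, rfl⟩)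
          refine ⟨p.append (SimpleGraph.Walk.cons hadj' SimpleGraph.Walk.nil), ?_⟩
          rw [walkWeight_append, walkWeight_cons, walkWeight_nil]
          linarith
  have hreach : ∀ v : V, T'.Reachable rt v := fun v => by
    obtain ⟨p, -⟩ := key _ v le_rfl
    exact ⟨p⟩
  have hconn' : T'.Connected := by
    rw [SimpleGraph.connected_iff]
    exact ⟨fun u v => (hreach u).symm.trans (hreach v), ⟨rt⟩⟩
  -- acyclicity
  have hacyclic : T'.IsAcyclic := by
    intro v c hc
    have hsuppne : c.support.toFinset.Nonempty := ⟨v, by simp⟩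
    obtain ⟨u, hu, hmax⟩ := Finset.exists_max_image c.support.toFinset f hsuppne
    rw [List.mem_toFinset] at hu
    set c' := c.rotate u hu with hc'def
    have hc' : c'.IsCycle := hc.rotate hu
    have hsupmax : ∀ x ∈ c'.support, f x ≤ f u := by
      intro x hx
      rw [SimpleGraph.Walk.support_eq_cons] at hx
      rcases List.mem_cons.mp hx with rfl | hx
      · exact le_rfl
      · have hperm := SimpleGraph.Walk.support_rotate c u hu
        have : x ∈ c.support.tail := hperm.mem_iff.mp hx
        have : x ∈ c.support := List.mem_of_mem_tail this
        exact hmax x (List.mem_toFinset.mpr this)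
    have hlen3 : 3 ≤ c'.length := hc'.three_le_length
    have hnotnil : ¬ c'.Nil := hc'.not_nil
    obtain ⟨x, hx, q, hq⟩ := SimpleGraph.Walk.not_nil_iff.mp hnotnil
    have hnotnil2 : ¬ c'.reverse.Nil := by
      rw [SimpleGraph.Walk.not_nil_iff_lt_length, SimpleGraph.Walk.length_reverse]
      omega
    obtain ⟨y, hy, q₂, hq₂⟩ := SimpleGraph.Walk.not_nil_iff.mp hnotnil2
    have hpu : ∀ z, T'.Adj u z → z ∈ c'.support → par u = z := by
      intro z hz hzs
      rcases (hchar u z).mp hz with ⟨h1, h2⟩ | ⟨h1, h2⟩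
      · exact h2
      · exfalso
        have h3 : f (par z) < f z := (hparspec z h1).2.2
        rw [h2] at h3
        have h4 : f z ≤ f u := hsupmax z hzs
        linarith
    have hxs : x ∈ c'.support := by
      rw [hq, SimpleGraph.Walk.support_cons]
      exact List.mem_cons_of_mem _ q.start_mem_support
    have hys : y ∈ c'.support := by
      have : y ∈ c'.reverse.support := by
        rw [hq₂, SimpleGraph.Walk.support_cons]
        exact List.mem_cons_of_mem _ q₂.start_mem_support
      rw [SimpleGraph.Walk.support_reverse, List.mem_reverse] at this
      exact this
    have hxy : x = y := (hpu x hx hxs).symm.trans (hpu y hy hys)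
    subst hxy
    have e1 : c'.edges = s(u, x) :: q.edges := by
      rw [hq, SimpleGraph.Walk.edges_cons]
    have e2 : c'.edges.reverse = s(u, x) :: q₂.edges := by
      rw [← SimpleGraph.Walk.edges_reverse, hq₂, SimpleGraph.Walk.edges_cons]
    have e3 : q.edges.reverse ++ [s(u, x)] = s(u, x) :: q₂.edges := by
      rw [← e2, e1, List.reverse_cons]
    have hnd : c'.edges.reverse.Nodup := by
      rw [List.nodup_reverse]
      exact hc'.isCircuit.isTrail.edges_nodup
    have hqlen : q.edges.length = q.length := q.length_edges
    have hclen : c'.length = q.length + 1 := by rw [hq, SimpleGraph.Walk.length_cons]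
    have hqne : q.edges.reverse ≠ [] := by
      intro hcon
      rw [List.reverse_eq_nil_iff] at hcon
      have := congrArg List.length hcon
      simp only [hqlen, List.length_nil] at this
      omega
    obtain ⟨b, t, hbt⟩ := List.exists_cons_of_ne_nil hqne
    rw [hbt, List.cons_append, List.cons.injEq] at e3
    obtain ⟨hbe, -⟩ := e3
    rw [e1, List.reverse_cons, hbt] at hnd
    rw [List.nodup_append] at hnd
    have hdisj := hnd.2.2
    exact hdisj b List.mem_cons_self _ (List.mem_singleton_self _) hbe
  exact ⟨T', hT'le, ⟨hconn', hacyclic⟩, fun v => by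
    obtain ⟨p, hp⟩ := key _ v le_rfl
    exact le_trans (gdist_le hw0' p) hp⟩

end SPT

section Weight
variable {V : Type*} [Fintype V] {w : Sym2 V → ℝ}

lemma graphWeight_le_finset_sum {H : SimpleGraph V} {s : Finset (Sym2 V)}
    (hsub : H.edgeSet ⊆ ↑s) (hw : ∀ e ∈ s, 0 ≤ w e) :
    graphWeight H w ≤ ∑ e ∈ s, w e := by
  apply Finset.sum_le_sum_of_subset_of_nonneg
  · intro e he
    rw [Set.Finite.mem_toFinset] at he
    exact hsub he
  · intro e he _
    exact hw e he

lemma graphWeight_mono {G H : SimpleGraph V} (h : H ≤ G)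
    (hw : ∀ e ∈ G.edgeSet, 0 ≤ w e) : graphWeight H w ≤ graphWeight G w := by
  apply Finset.sum_le_sum_of_subset_of_nonneg
  · intro e he
    rw [Set.Finite.mem_toFinset] at he ⊢
    exact SimpleGraph.edgeSet_mono h he
  · intro e he _
    exact hw e (by rwa [Set.Finite.mem_toFinset] at he)

end Weight

section Greedy
variable {V : Type*} {T : SimpleGraph V} {w : Sym2 V → ℝ}

lemma greedy (hw : ∀ e ∈ T.edgeSet, 0 ≤ w e) (f : V → ℝ) (hf : ∀ v, 0 ≤ f v)
    (β : ℝ) (hβ : 0 ≤ β) :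
    ∀ {a b : V} (Wk : T.Walk a b) (x : V) (s : ℝ), 0 ≤ s →
      (∃ P : T.Walk x a, walkWeight w P ≤ s) → s ≤ β * f a →
    ∃ M : Finset V, β * (∑ m ∈ M, f m) ≤ s + walkWeight w Wk ∧
      ∀ v ∈ Wk.support, ∃ m, (m = x ∨ m ∈ M) ∧
        ∃ Q : T.Walk m v, walkWeight w Q ≤ β * f v := by
  classical
  intro a b Wk
  induction Wk with
  | nil =>
      intro x s hs ⟨P, hP⟩ hsle
      refine ⟨∅, by simpa using hs, ?_⟩
      rename_i a
      intro v hv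
      rw [SimpleGraph.Walk.support_nil, List.mem_singleton] at hv
      subst hv
      exact ⟨x, Or.inl rfl, P, le_trans hP hsle⟩
  | @cons a a₂ b h q ih =>
      intro x s hs ⟨P, hP⟩ hsle
      have hwe : 0 ≤ w s(a, a₂) := hw _ ((T.mem_edgeSet).mpr h)
      set s' := s + w s(a, a₂) with hs'def
      have hs' : 0 ≤ s' := by positivity
      have hP' : ∃ P' : T.Walk x a₂, walkWeight w P' ≤ s' := by
        refine ⟨P.append (SimpleGraph.Walk.cons h SimpleGraph.Walk.nil), ?_⟩
        rw [walkWeight_append, walkWeight_cons, walkWeight_nil]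
        linarith
      by_cases hcase : s' ≤ β * f a₂
      · obtain ⟨M, hM1, hM2⟩ := ih x s' hs' hP' hcase
        refine ⟨M, ?_, ?_⟩
        · rw [walkWeight_cons]
          linarith
        · intro v hv
          rw [SimpleGraph.Walk.support_cons, List.mem_cons] at hv
          rcases hv with rfl | hv
          · exact ⟨x, Or.inl rfl, P, le_trans hP hsle⟩
          · exact hM2 v hv
      · push_neg at hcase
        obtain ⟨M, hM1, hM2⟩ := ih a₂ 0 le_rfl ⟨SimpleGraph.Walk.nil, by simp⟩
          (mul_nonneg hβ (hf _))
        refine ⟨insert a₂ M, ?_, ?_⟩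
        · have hins : ∑ m ∈ insert a₂ M, f m ≤ f a₂ + ∑ m ∈ M, f m := by
            by_cases ha₂ : a₂ ∈ M
            · rw [Finset.insert_eq_self.mpr ha₂]
              have := hf a₂
              linarith
            · rw [Finset.sum_insert ha₂]
          rw [walkWeight_cons]
          have h2 : β * ∑ m ∈ insert a₂ M, f m ≤ β * (f a₂ + ∑ m ∈ M, f m) :=
            mul_le_mul_of_nonneg_left hins hβ
          rw [mul_add] at h2
          linarith
        · intro v hv
          rw [SimpleGraph.Walk.support_cons, List.mem_cons] at hv
          rcases hv with rfl | hv
          · exact ⟨x, Or.inl rfl, P, le_trans hP hsle⟩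
          · obtain ⟨m, hm, Q, hQ⟩ := hM2 v hv
            refine ⟨m, ?_, Q, hQ⟩
            rcases hm with rfl | hm
            · exact Or.inr (Finset.mem_insert_self _ _)
            · exact Or.inr (Finset.mem_insert_of_mem hm)

end Greedy

/-- the inverse-tradeoff shallow-light tree: a spanning tree of weight at
most `(1+γ)` times the minimum spanning tree weight, approximating all distances from
the root `rt` to within a factor `c/γ`. -/
theorem shallow_light_tree_light_regime_exists :
    ∃ c : ℝ, 0 < c ∧
      ∀ (V : Type*) [Fintype V] (G : SimpleGraph V) (w : Sym2 V → ℝ),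
        G.Connected → (∀ e ∈ G.edgeSet, 0 < w e) →
        ∀ rt : V, ∀ γ : ℝ, 0 < γ → γ < 1 →
        ∀ T : SimpleGraph V, IsMST G T w →
        ∃ T' : SimpleGraph V, T' ≤ G ∧ T'.IsTree ∧
          graphWeight T' w ≤ (1 + γ) * graphWeight T w ∧
          (∀ v : V, gdist T' w rt v ≤ c / γ * gdist G w rt v) := by
  refine ⟨5, by norm_num, ?_⟩
  intro V _ G w hconn hw rt γ hγ0 hγ1 T hMST
  classical
  obtain ⟨hTG, hTtree, -⟩ := hMST
  have hw0 : ∀ e ∈ G.edgeSet, 0 ≤ w e := fun e he => (hw e he).le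
  have hwT0 : ∀ e ∈ T.edgeSet, 0 ≤ w e := fun e he =>
    hw0 e (SimpleGraph.edgeSet_mono hTG he)
  set f : V → ℝ := gdist G w rt with hf
  have hf0 : ∀ v, 0 ≤ f v := fun v => gdist_nonneg hw0
  have hfrt : f rt = 0 := gdist_self hw0 rt
  set β : ℝ := 2 / γ with hβ
  have hβpos : 0 < β := by positivity
  -- the tour
  obtain ⟨W, hWcov, hWcount⟩ := exists_tour hTtree.isConnected rt
  have hgT0 : 0 ≤ graphWeight T w := Finset.sum_nonneg fun e he =>
    hwT0 e ((Set.Finite.mem_toFinset _).mp he)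
  have hWweight : walkWeight w W ≤ 2 * graphWeight T w := by
    refine list_sum_le_two_mul_finset_sum W.edges _ ?_ hWcount ?_
    · intro e he
      exact (Set.Finite.mem_toFinset _).mpr (W.edges_subset_edgeSet he)
    · intro e he
      exact hwT0 e ((Set.Finite.mem_toFinset _).mp he)
  -- greedy marking along the tour
  obtain ⟨M, hM1, hM2⟩ := greedy hwT0 f hf0 β hβpos.le W rt 0 le_rfl
    ⟨SimpleGraph.Walk.nil, by simp⟩ (mul_nonneg hβpos.le (hf0 rt))
  -- chosen shortest paths
  have hpaths : ∀ m : V, ∃ p : G.Walk rt m, walkWeight w p = f m := fun m =>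
    exists_shortest_walk hw0 (hconn rt m)
  choose P hP using hpaths
  set M' : Finset V := insert rt M with hM'def
  set ES : Set (Sym2 V) := T.edgeSet ∪ {e | ∃ m ∈ M', e ∈ (P m).edges} with hESdef
  set H : SimpleGraph V := SimpleGraph.fromEdgeSet ES with hHdef
  have hESG : ES ⊆ G.edgeSet := by
    intro e he
    rcases he with he | ⟨m, -, he⟩
    · exact SimpleGraph.edgeSet_mono hTG he
    · exact (P m).edges_subset_edgeSet he
  have hHG : H ≤ G := by
    intro a b hab
    rw [hHdef, SimpleGraph.fromEdgeSet_adj] at hab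
    exact (G.mem_edgeSet).mp (hESG hab.1)
  have hTH : T ≤ H := by
    intro a b hab
    rw [hHdef, SimpleGraph.fromEdgeSet_adj]
    exact ⟨Or.inl ((T.mem_edgeSet).mpr hab), hab.ne⟩
  have hHconn : H.Connected := SimpleGraph.Connected.mono hTH hTtree.isConnected
  have hwH : ∀ e ∈ H.edgeSet, 0 < w e := fun e he =>
    hw e (SimpleGraph.edgeSet_mono hHG he)
  have hwH0 : ∀ e ∈ H.edgeSet, 0 ≤ w e := fun e he => (hwH e he).le
  -- total marked cost
  have hMsum : ∑ m ∈ M', f m ≤ γ * graphWeight T w := by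
    have h1 : β * ∑ m ∈ M, f m ≤ 2 * graphWeight T w := by
      rw [zero_add] at hM1
      linarith
    have h2 : ∑ m ∈ M, f m ≤ γ * graphWeight T w := by
      rw [hβ] at h1
      rw [div_mul_eq_mul_div, div_le_iff₀ hγ0] at h1
      nlinarith [Finset.sum_nonneg fun m (_ : m ∈ M) => hf0 m]
    have h3 : ∑ m ∈ M', f m ≤ f rt + ∑ m ∈ M, f m := by
      by_cases hrm : rt ∈ M
      · rw [hM'def, Finset.insert_eq_self.mpr hrm]
        rw [hfrt]
        linarith
      · rw [hM'def, Finset.sum_insert hrm]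
    rw [hfrt] at h3
    linarith
  -- weight of H
  have hgWH : graphWeight H w ≤ (1 + γ) * graphWeight T w := by
    set s : Finset (Sym2 V) :=
      T.edgeSet.toFinite.toFinset ∪ M'.biUnion (fun m => (P m).edges.toFinset) with hsdef
    have hmem : ∀ e ∈ s, e ∈ G.edgeSet := by
      intro e he
      rcases Finset.mem_union.mp he with he | he
      · rw [Set.Finite.mem_toFinset] at he
        exact SimpleGraph.edgeSet_mono hTG he
      · obtain ⟨m, -, he⟩ := Finset.mem_biUnion.mp he
        rw [List.mem_toFinset] at he
        exact (P m).edges_subset_edgeSet he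
    have h1 : graphWeight H w ≤ ∑ e ∈ s, w e := by
      apply graphWeight_le_finset_sum
      · intro e he
        rw [hHdef, SimpleGraph.edgeSet_fromEdgeSet] at he
        rcases he.1 with h | ⟨m, hm, h⟩
        · exact Finset.mem_union_left _ (by rwa [Set.Finite.mem_toFinset])
        · exact Finset.mem_union_right _
            (Finset.mem_biUnion.mpr ⟨m, hm, List.mem_toFinset.mpr h⟩)
      · intro e he
        exact hw0 e (hmem e he)
    have hbi : ∑ e ∈ M'.biUnion (fun m => (P m).edges.toFinset), w e ≤
        ∑ m ∈ M', ∑ e ∈ (P m).edges.toFinset, w e := by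
      apply finset_sum_biUnion_le
      intro m _ e he
      rw [List.mem_toFinset] at he
      exact hw0 e ((P m).edges_subset_edgeSet he)
    have h2 : ∑ e ∈ s, w e ≤ graphWeight T w +
        ∑ m ∈ M', ∑ e ∈ (P m).edges.toFinset, w e := by
      rw [hsdef]
      refine le_trans (finset_sum_union_le _ _ ?_) ?_
      · intro e he
        exact hw0 e (hmem e (by rwa [hsdef]))
      · have hgt : graphWeight T w = ∑ e ∈ T.edgeSet.toFinite.toFinset, w e := rfl
        rw [hgt]
        exact add_le_add le_rfl hbi
    have h3 : ∀ m ∈ M', ∑ e ∈ (P m).edges.toFinset, w e ≤ f m := by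
      intro m _
      rw [← hP m]
      exact finset_sum_le_list_sum _ fun e he => hw0 e ((P m).edges_subset_edgeSet he)
    have h4 : ∑ m ∈ M', ∑ e ∈ (P m).edges.toFinset, w e ≤ ∑ m ∈ M', f m :=
      Finset.sum_le_sum h3
    linarith
  -- distances in H
  have hHdist : ∀ v : V, gdist H w rt v ≤ (1 + 2 * β) * f v := by
    intro v
    obtain ⟨m, hm, Q, hQ⟩ := hM2 v (hWcov v)
    have hmM' : m ∈ M' := by
      rcases hm with rfl | hm
      · exact Finset.mem_insert_self _ _
      · exact Finset.mem_insert_of_mem hm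
    have hQG : ∀ e ∈ Q.reverse.edges, e ∈ G.edgeSet := fun e he =>
      SimpleGraph.edgeSet_mono hTG (Q.reverse.edges_subset_edgeSet he)
    have hfm : f m ≤ f v + β * f v := by
      have h1 := gdist_le_gdist_add_walk hw0 (hconn rt v) (Q.reverse.transfer G hQG)
      rw [walkWeight_transfer, walkWeight_reverse] at h1
      rw [hf]
      calc gdist G w rt m ≤ gdist G w rt v + walkWeight w Q := h1
        _ ≤ f v + β * f v := by rw [← hf]; linarith
    have hPmH : ∀ e ∈ (P m).edges, e ∈ H.edgeSet := by
      intro e he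
      rw [hHdef, SimpleGraph.edgeSet_fromEdgeSet]
      refine ⟨Or.inr ⟨m, hmM', he⟩, ?_⟩
      exact G.not_isDiag_of_mem_edgeSet ((P m).edges_subset_edgeSet he)
    have hQH : ∀ e ∈ Q.edges, e ∈ H.edgeSet := by
      intro e he
      rw [hHdef, SimpleGraph.edgeSet_fromEdgeSet]
      refine ⟨Or.inl (Q.edges_subset_edgeSet he), ?_⟩
      exact T.not_isDiag_of_mem_edgeSet (Q.edges_subset_edgeSet he)
    have h2 := gdist_le hwH0 (((P m).transfer H hPmH).append (Q.transfer H hQH))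
    rw [walkWeight_append, walkWeight_transfer, walkWeight_transfer, hP m] at h2
    have h5 := hf0 v
    calc gdist H w rt v ≤ f m + walkWeight w Q := h2
      _ ≤ (f v + β * f v) + β * f v := by linarith
      _ = (1 + 2 * β) * f v := by ring
  -- the shortest path tree of H
  obtain ⟨T', hT'H, hT'tree, hT'dist⟩ := exists_spt H w hHconn hwH rt
  refine ⟨T', le_trans hT'H hHG, hT'tree, ?_, ?_⟩
  · exact le_trans (graphWeight_mono hT'H hwH0) hgWH
  · intro v
    have hcoef : 1 + 2 * β ≤ 5 / γ := by
      rw [hβ, le_div_iff₀ hγ0]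
      have h9 : (1 + 2 * (2 / γ)) * γ = γ + 4 := by field_simp; ring
      rw [h9]
      linarith
    calc gdist T' w rt v ≤ gdist H w rt v := hT'dist v
      _ ≤ (1 + 2 * β) * f v := hHdist v
      _ ≤ 5 / γ * f v := mul_le_mul_of_nonneg_right hcoef (hf0 v)
      _ = 5 / γ * gdist G w rt v := by rw [hf]
end

section
/- Let (X,d) be a pseudometric space, ε ∈ (0,1] a real number, and rt, x, y, y' ∈ X. Let ℓ : X × X → ℝ be another pseudometric on X with d(a,b) ≤ ℓ(a,b) for all a,b ∈ X, and let D : X → ℝ satisfy d(rt,z) ≤ D(z) ≤ (1+ε)·d(rt,z) for each z ∈ {x, y, y'}. Assume ℓ(x,y) ≤ ε·D(x) and ℓ(y,y') ≤ ε·D(y). Then (a) ℓ(x,y') ≤ 8ε·d(rt,x), and (b) D(y') + ℓ(x,y') ≤ (1+25ε)·d(rt,x). -/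
/-!
Write `R = d(rt, x)`. Since `ε ≤ 1`, a tour step of length at most `ε · D(z)` has length at most
`2ε · d(rt, z)`, and since `ℓ` dominates `d`, such a step moves the distance from the root by at
most that much. So `ℓ(x, y) ≤ 2εR`, `d(rt, y) ≤ 3R`, `ℓ(y, y') ≤ 6εR`, whence `ℓ(x, y') ≤ 8εR`,
`d(rt, y') ≤ (1 + 8ε)R` and `D(y') ≤ (1 + ε)(1 + 8ε)R ≤ (1 + 17ε)R`.
-/

lemma mul_le_two_mul_of_le_one_add_mul {ε a r : ℝ} (hε0 : 0 ≤ ε) (hε1 : ε ≤ 1) (hr : 0 ≤ r)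
    (ha : a ≤ (1 + ε) * r) : ε * a ≤ 2 * ε * r :=
  calc ε * a ≤ ε * ((1 + ε) * r) := mul_le_mul_of_nonneg_left ha hε0
    _ ≤ ε * (2 * r) := by gcongr; linarith
    _ = 2 * ε * r := by ring

lemma dist_le_one_add_mul_of_dominated {X : Type*} [PseudoMetricSpace X] {ℓ : X → X → ℝ}
    (hdℓ : ∀ a b, dist a b ≤ ℓ a b) {c : ℝ} {rt z w : X} (h : ℓ z w ≤ c * dist rt z) :
    dist rt w ≤ (1 + c) * dist rt z :=
  calc dist rt w ≤ dist rt z + dist z w := dist_triangle rt z w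
    _ ≤ dist rt z + ℓ z w := by gcongr; exact hdℓ z w
    _ ≤ (1 + c) * dist rt z := by linarith

theorem slt_stretch_lemma_general {X : Type*} [PseudoMetricSpace X]
    (ε : ℝ) (hε0 : 0 < ε) (hε1 : ε ≤ 1)
    (rt x y y' : X) (ℓ : X → X → ℝ)
    (hℓ_tri : ∀ a b c, ℓ a c ≤ ℓ a b + ℓ b c)
    (hdℓ : ∀ a b, dist a b ≤ ℓ a b)
    (D : X → ℝ)
    (hDx : dist rt x ≤ D x ∧ D x ≤ (1 + ε) * dist rt x)
    (hDy : dist rt y ≤ D y ∧ D y ≤ (1 + ε) * dist rt y)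
    (hDy' : dist rt y' ≤ D y' ∧ D y' ≤ (1 + ε) * dist rt y')
    (hxy : ℓ x y ≤ ε * D x) (hyy' : ℓ y y' ≤ ε * D y) :
    ℓ x y' ≤ 8 * ε * dist rt x ∧
    D y' + ℓ x y' ≤ (1 + 25 * ε) * dist rt x := by
  have hR : 0 ≤ dist rt x := dist_nonneg
  have hxy_R : ℓ x y ≤ 2 * ε * dist rt x :=
    hxy.trans (mul_le_two_mul_of_le_one_add_mul hε0.le hε1 hR hDx.2)
  have hy_R : dist rt y ≤ 3 * dist rt x := by
    have := dist_le_one_add_mul_of_dominated hdℓ hxy_R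
    nlinarith
  have hyy'_R : ℓ y y' ≤ 6 * ε * dist rt x := by
    have := hyy'.trans (mul_le_two_mul_of_le_one_add_mul hε0.le hε1 dist_nonneg hDy.2)
    nlinarith
  have hxy'_R : ℓ x y' ≤ 8 * ε * dist rt x := by linarith [hℓ_tri x y y']
  have hy'_R : D y' ≤ (1 + 17 * ε) * dist rt x := by
    have := dist_le_one_add_mul_of_dominated hdℓ hxy'_R
    nlinarith [hDy'.2, mul_nonneg hε0.le hR]
  exact ⟨hxy'_R, by linarith⟩

/-- the abstract metric form of the SLT stretch lemma. Here `dist` is the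
shortest-path metric of the graph, `ℓ` is the (dominating) Euler-tour pseudometric,
and `D` is a `(1+ε)`-approximation of the distance from the root `rt`. -/
theorem slt_stretch_lemma {X : Type*} [PseudoMetricSpace X]
    (ε : ℝ) (hε0 : 0 < ε) (hε1 : ε ≤ 1)
    (rt x y y' : X) (ℓ : X → X → ℝ)
    (hℓ_self : ∀ a, ℓ a a = 0)
    (hℓ_symm : ∀ a b, ℓ a b = ℓ b a)
    (hℓ_tri : ∀ a b c, ℓ a c ≤ ℓ a b + ℓ b c)
    (hdℓ : ∀ a b, dist a b ≤ ℓ a b)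
    (D : X → ℝ)
    (hDx : dist rt x ≤ D x ∧ D x ≤ (1 + ε) * dist rt x)
    (hDy : dist rt y ≤ D y ∧ D y ≤ (1 + ε) * dist rt y)
    (hDy' : dist rt y' ≤ D y' ∧ D y' ≤ (1 + ε) * dist rt y')
    (hxy : ℓ x y ≤ ε * D x) (hyy' : ℓ y y' ≤ ε * D y) :
    ℓ x y' ≤ 8 * ε * dist rt x ∧
    D y' + ℓ x y' ≤ (1 + 25 * ε) * dist rt x :=
  slt_stretch_lemma_general ε hε0 hε1 rt x y y' ℓ hℓ_tri hdℓ D hDx hDy hDy' hxy hyy'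
end

section
/- Let A be a finite nonempty set and let S : A → (finite subsets of A) satisfy v ∈ S(v) for every v ∈ A, and u ∈ S(v) if and only if v ∈ S(u), for all u,v ∈ A. Let π be a uniformly random linear ordering of A. Say that v ∈ A is killed if there exists w ∈ S(v) such that w precedes every other element of S(v) ∪ S(w) in π. Let P = { {u,v} : u ≠ v and u ∈ S(v) } be the set of unordered adjacent pairs. Then the expected number of pairs {u,v} ∈ P for which u is killed or v is killed is at least |P|/2. -/
set_option maxRecDepth 4000


open Classical Finset

section helpers
variable {α : Type*} [Fintype α] [DecidableEq α]
variable {α : Type*} [Fintype α] [DecidableEq α]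

/-- All elements of `T` are equally likely to be the minimum of `T`. -/
private lemma count_min_eq (T : Finset α) {u w : α} (hu : u ∈ T) (hw : w ∈ T) :
    (Finset.univ.filter (fun π : α ≃ Fin (Fintype.card α) =>
        ∀ x ∈ T, x ≠ u → π u < π x)).card
      = (Finset.univ.filter (fun π : α ≃ Fin (Fintype.card α) =>
        ∀ x ∈ T, x ≠ w → π w < π x)).card := by
  classical
  rcases eq_or_ne u w with rfl | huw
  · rfl
  refine Finset.card_nbij' (fun π => (Equiv.swap u w).trans π)
    (fun π => (Equiv.swap u w).trans π) ?_ ?_ ?_ ?_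
  · intro π hπ
    simp only [Finset.mem_coe, Finset.mem_filter, Finset.mem_univ, true_and] at hπ ⊢
    intro x hx hxw
    rcases eq_or_ne x u with rfl | hxu
    · simpa [Equiv.swap_apply_left, Equiv.swap_apply_right] using hπ w hw (Ne.symm huw)
    · have : ((Equiv.swap u w).trans π) x = π x := by
        simp [Equiv.swap_apply_of_ne_of_ne hxu hxw]
      rw [this]
      simpa [Equiv.swap_apply_right] using hπ x hx hxu
  · intro π hπ
    simp only [Finset.mem_coe, Finset.mem_filter, Finset.mem_univ, true_and] at hπ ⊢
    intro x hx hxu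
    rcases eq_or_ne x w with rfl | hxw
    · simpa [Equiv.swap_apply_left, Equiv.swap_apply_right] using hπ u hu huw
    · have : ((Equiv.swap u w).trans π) x = π x := by
        simp [Equiv.swap_apply_of_ne_of_ne hxu hxw]
      rw [this]
      simpa [Equiv.swap_apply_left] using hπ x hx hxw
  · intro π _; ext x; simp
  · intro π _; ext x; simp

private lemma count_min_mul (T : Finset α) {u : α} (hu : u ∈ T) :
    T.card * (Finset.univ.filter (fun π : α ≃ Fin (Fintype.card α) =>
        ∀ x ∈ T, x ≠ u → π u < π x)).card
      = Fintype.card (α ≃ Fin (Fintype.card α)) := by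
  classical
  have hT : T.Nonempty := ⟨u, hu⟩
  set f : (α ≃ Fin (Fintype.card α)) → α :=
    fun π => π.symm ((T.image (fun x => π x)).min' (hT.image _)) with hf
  have hfT : ∀ π : α ≃ Fin (Fintype.card α), f π ∈ T := by
    intro π
    have : (T.image (fun x => π x)).min' (hT.image _) ∈ T.image (fun x => π x) :=
      Finset.min'_mem _ _
    obtain ⟨x, hx, hxe⟩ := Finset.mem_image.1 this
    rw [hf]
    simp only [← hxe, Equiv.symm_apply_apply]
    exact hx
  have hfmin : ∀ (π : α ≃ Fin (Fintype.card α)), ∀ x ∈ T, x ≠ f π → π (f π) < π x := by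
    intro π x hx hxf
    have h1 : π (f π) = (T.image (fun x => π x)).min' (hT.image _) := by
      rw [hf]; exact π.apply_symm_apply _
    have h2 : π (f π) ≤ π x := by
      rw [h1]; exact Finset.min'_le _ _ (Finset.mem_image_of_mem _ hx)
    exact lt_of_le_of_ne h2 (fun h => hxf ((π.injective h).symm))
  have hfiber : ∀ w ∈ T, (Finset.univ.filter (fun π : α ≃ Fin (Fintype.card α) => f π = w))
      = (Finset.univ.filter (fun π : α ≃ Fin (Fintype.card α) => ∀ x ∈ T, x ≠ w → π w < π x)) := by
    intro w hw
    ext π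
    simp only [Finset.mem_filter, Finset.mem_univ, true_and]
    constructor
    · rintro rfl; exact hfmin π
    · intro hmin
      by_contra hne
      have h1 := hmin (f π) (hfT π) hne
      have h2 := hfmin π w hw (fun h => hne h.symm)
      exact absurd h1 (not_lt.2 (le_of_lt h2))
  have hcount : (Finset.univ : Finset (α ≃ Fin (Fintype.card α))).card
      = ∑ w ∈ T, (Finset.univ.filter (fun π : α ≃ Fin (Fintype.card α) => f π = w)).card :=
    Finset.card_eq_sum_card_fiberwise (fun π _ => hfT π)
  have hconst : ∀ w ∈ T, (Finset.univ.filter (fun π : α ≃ Fin (Fintype.card α) => f π = w)).card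
      = (Finset.univ.filter (fun π : α ≃ Fin (Fintype.card α) =>
          ∀ x ∈ T, x ≠ u → π u < π x)).card := by
    intro w hw
    rw [hfiber w hw]
    exact (count_min_eq T hu hw).symm
  have hcu : Fintype.card (α ≃ Fin (Fintype.card α))
      = (Finset.univ : Finset (α ≃ Fin (Fintype.card α))).card := (Finset.card_univ).symm
  rw [hcu, hcount, Finset.sum_congr rfl hconst, Finset.sum_const, smul_eq_mul]

section aux
variable (S : α → Finset α) (hself : ∀ v, v ∈ S v) (hsymm : ∀ u v, u ∈ S v ↔ v ∈ S u)
  (P : Finset (Sym2 α))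
  (hP : P = Finset.univ.filter (fun e => ∃ u v : α, u ≠ v ∧ u ∈ S v ∧ e = s(u, v)))

include hP in
private lemma mem_P_iff : ∀ e : Sym2 α, e ∈ P ↔ ∃ u v : α, u ≠ v ∧ u ∈ S v ∧ e = s(u, v) := by
  subst hP; intro e; simp

include hself hsymm hP in
private lemma deg_eq (v : α) :
    (S v).card - 1 = (P.filter (fun e => v ∈ e)).card := by
  classical
  have h1 : ((S v).erase v).card = (P.filter (fun e => v ∈ e)).card := by
    refine Finset.card_bij (fun u _ => s(u, v)) ?_ ?_ ?_
    · intro u hu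
      rw [Finset.mem_filter]
      obtain ⟨hune, huS⟩ := Finset.mem_erase.1 hu
      refine ⟨(mem_P_iff S P hP s(u,v)).2 ⟨u, v, hune, huS, rfl⟩, ?_⟩
      exact Sym2.mem_mk_right u v
    · intro u hu u' hu' he
      obtain ⟨hune, _⟩ := Finset.mem_erase.1 hu
      rcases Sym2.eq_iff.1 he with ⟨h, _⟩ | ⟨h1, h2⟩
      · exact h
      · exact absurd h1 hune
    · intro e he
      rw [Finset.mem_filter] at he
      obtain ⟨heP, hve⟩ := he
      obtain ⟨a, b, hab, haS, rfl⟩ := (mem_P_iff S P hP e).1 heP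
      rcases Sym2.mem_iff.1 hve with rfl | rfl
      · refine ⟨b, Finset.mem_erase.2 ⟨Ne.symm hab, (hsymm b v).2 haS⟩, ?_⟩
        exact Sym2.eq_swap
      · exact ⟨a, Finset.mem_erase.2 ⟨hab, haS⟩, rfl⟩
  rw [← h1, Finset.card_erase_of_mem (hself v)]

include hsymm hP in
private lemma Q_card :
    (Finset.univ.filter (fun p : α × α => p.1 ≠ p.2 ∧ p.1 ∈ S p.2)).card = 2 * P.card := by
  classical
  set Q := Finset.univ.filter (fun p : α × α => p.1 ≠ p.2 ∧ p.1 ∈ S p.2) with hQ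
  have hmap : ∀ p ∈ Q, s(p.1, p.2) ∈ P := by
    intro p hp
    rw [hQ, Finset.mem_filter] at hp
    exact (mem_P_iff S P hP _).2 ⟨p.1, p.2, hp.2.1, hp.2.2, rfl⟩
  rw [Finset.card_eq_sum_card_fiberwise hmap]
  have hfib : ∀ e ∈ P, (Q.filter (fun p => s(p.1, p.2) = e)).card = 2 := by
    intro e he
    obtain ⟨a, b, hab, haS, rfl⟩ := (mem_P_iff S P hP e).1 he
    have : Q.filter (fun p => s(p.1, p.2) = s(a, b)) = {(a, b), (b, a)} := by
      ext p
      simp only [Finset.mem_filter, hQ, Finset.mem_univ, true_and, Finset.mem_insert,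
        Finset.mem_singleton]
      constructor
      · rintro ⟨⟨hne, hmem⟩, heq⟩
        rcases Sym2.eq_iff.1 heq with ⟨h1, h2⟩ | ⟨h1, h2⟩
        · left; exact Prod.ext h1 h2
        · right; exact Prod.ext h1 h2
      · rintro (rfl | rfl)
        · exact ⟨⟨hab, haS⟩, rfl⟩
        · exact ⟨⟨Ne.symm hab, (hsymm b a).2 haS⟩, Sym2.eq_swap⟩
    rw [this, Finset.card_insert_of_notMem, Finset.card_singleton]
    simp only [Finset.mem_singleton]
    intro h
    exact hab (congrArg Prod.fst h)
  calc ∑ e ∈ P, (Q.filter (fun p => s(p.1, p.2) = e)).card = ∑ _e ∈ P, 2 :=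
        Finset.sum_congr rfl hfib
    _ = 2 * P.card := by rw [Finset.sum_const, smul_eq_mul, mul_comm]

include hself hsymm hP in
private lemma stepA (π : α ≃ Fin (Fintype.card α)) :
    ∑ p ∈ Finset.univ.filter (fun p : α × α => p.1 ≠ p.2 ∧ p.1 ∈ S p.2),
        (if (∀ x ∈ S p.1 ∪ S p.2, x ≠ p.1 → π p.1 < π x) then (S p.2).card - 1 else 0)
      ≤ 2 * (P.filter (fun e => ∃ x ∈ e,
          ∃ w ∈ S x, ∀ u ∈ S x ∪ S w, u ≠ w → π w < π u)).card := by
  classical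
  set Q := Finset.univ.filter (fun p : α × α => p.1 ≠ p.2 ∧ p.1 ∈ S p.2) with hQ
  set K := P.filter (fun e => ∃ x ∈ e,
      ∃ w ∈ S x, ∀ u ∈ S x ∪ S w, u ≠ w → π w < π u) with hK
  set F := Q.filter (fun p => ∀ x ∈ S p.1 ∪ S p.2, x ≠ p.1 → π p.1 < π x) with hF
  have hQmem : ∀ p : α × α, p ∈ Q ↔ p.1 ≠ p.2 ∧ p.1 ∈ S p.2 := by
    intro p; rw [hQ, Finset.mem_filter]; simp
  have hstep1 : ∑ p ∈ Q,
      (if (∀ x ∈ S p.1 ∪ S p.2, x ≠ p.1 → π p.1 < π x) then (S p.2).card - 1 else 0)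
      = ∑ p ∈ F, ((S p.2).card - 1) := (Finset.sum_filter _ _).symm
  have hinj : ∀ p ∈ F, ∀ q ∈ F, p.2 = q.2 → p = q := by
    intro p hp q hq h2
    rw [hF, Finset.mem_filter] at hp hq
    obtain ⟨hpQ, hpmin⟩ := hp
    obtain ⟨hqQ, hqmin⟩ := hq
    obtain ⟨hpne, hpS⟩ := (hQmem p).1 hpQ
    obtain ⟨hqne, hqS⟩ := (hQmem q).1 hqQ
    by_contra hne
    have h1ne : p.1 ≠ q.1 := fun h => hne (Prod.ext h h2)
    have ha : π p.1 < π q.1 := hpmin q.1 (Finset.mem_union_right _ (h2 ▸ hqS)) (Ne.symm h1ne)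
    have hb : π q.1 < π p.1 := hqmin p.1 (Finset.mem_union_right _ (h2.symm ▸ hpS)) h1ne
    exact absurd ha (not_lt.2 (le_of_lt hb))
  set V := F.image Prod.snd with hV
  have hstep2 : ∑ p ∈ F, ((S p.2).card - 1) = ∑ v ∈ V, ((S v).card - 1) := by
    rw [hV]
    exact (Finset.sum_image (f := fun v => (S v).card - 1) (g := Prod.snd)
      (fun p hp q hq h => hinj p hp q hq h)).symm
  have hkill : ∀ v ∈ V, ∀ e ∈ P, v ∈ e → e ∈ K := by
    intro v hv e heP hve
    rw [hV, Finset.mem_image] at hv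
    obtain ⟨p, hpF, hp2⟩ := hv
    rw [hF, Finset.mem_filter] at hpF
    obtain ⟨hpQ, hpmin⟩ := hpF
    obtain ⟨hpne, hpS⟩ := (hQmem p).1 hpQ
    rw [hK, Finset.mem_filter]
    refine ⟨heP, v, hve, p.1, hp2 ▸ hpS, ?_⟩
    intro y hy hyne
    apply hpmin y _ hyne
    rw [Finset.union_comm]
    rw [hp2]
    exact hy
  have hdeg : ∀ v ∈ V, (S v).card - 1 ≤ (K.filter (fun e => v ∈ e)).card := by
    intro v hv
    rw [deg_eq S hself hsymm P hP v]
    apply Finset.card_le_card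
    intro e he
    rw [Finset.mem_filter] at he ⊢
    exact ⟨hkill v hv e he.1 he.2, he.2⟩
  have hdc : ∑ v ∈ V, (K.filter (fun e => v ∈ e)).card
      = ∑ e ∈ K, (V.filter (fun v => v ∈ e)).card := by
    simp only [Finset.card_filter]
    exact Finset.sum_comm
  have htwo : ∀ e ∈ K, (V.filter (fun v => v ∈ e)).card ≤ 2 := by
    intro e he
    rw [hK, Finset.mem_filter] at he
    obtain ⟨a, b, hab, _, rfl⟩ := (mem_P_iff S P hP e).1 he.1
    have hsub : V.filter (fun v => v ∈ s(a, b)) ⊆ {a, b} := by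
      intro x hx
      rw [Finset.mem_filter] at hx
      rcases Sym2.mem_iff.1 hx.2 with rfl | rfl
      · exact Finset.mem_insert_self _ _
      · exact Finset.mem_insert_of_mem (Finset.mem_singleton_self _)
    calc (V.filter (fun v => v ∈ s(a, b))).card ≤ ({a, b} : Finset α).card :=
          Finset.card_le_card hsub
      _ ≤ 2 := Finset.card_insert_le _ _ |>.trans (by simp)
  calc ∑ p ∈ Q, (if (∀ x ∈ S p.1 ∪ S p.2, x ≠ p.1 → π p.1 < π x) then (S p.2).card - 1 else 0)
      = ∑ v ∈ V, ((S v).card - 1) := hstep1.trans hstep2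
    _ ≤ ∑ v ∈ V, (K.filter (fun e => v ∈ e)).card := Finset.sum_le_sum hdeg
    _ = ∑ e ∈ K, (V.filter (fun v => v ∈ e)).card := hdc
    _ ≤ ∑ _e ∈ K, 2 := Finset.sum_le_sum htwo
    _ = 2 * K.card := by rw [Finset.sum_const, smul_eq_mul, mul_comm]

end aux

end helpers

open Classical in
/-- under a uniformly random linear ordering of the finite set `A = α`
(modelled as a bijection `π : α ≃ Fin |α|`), the expected number of adjacent pairs
`{u,v}` (i.e. `u ≠ v` with `u ∈ S(v)`) one of whose endpoints is killed — where `v` is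
killed if some `w ∈ S(v)` precedes every other element of `S(v) ∪ S(w)` — is at least
half the number of adjacent pairs. (The expectation is written as a sum over all
orderings, weighted against the total number of orderings.) -/
theorem expected_killed_pairs {α : Type*} [Fintype α] [DecidableEq α] [Nonempty α]
    (S : α → Finset α) (hself : ∀ v, v ∈ S v)
    (hsymm : ∀ u v, u ∈ S v ↔ v ∈ S u) :
    ∀ (P : Finset (Sym2 α)),
      P = Finset.univ.filter (fun e => ∃ u v : α, u ≠ v ∧ u ∈ S v ∧ e = s(u, v)) →
      (P.card : ℝ) / 2 * (Fintype.card (α ≃ Fin (Fintype.card α)) : ℝ) ≤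
        ∑ π : α ≃ Fin (Fintype.card α),
          ((P.filter (fun e => ∃ x ∈ e,
              ∃ w ∈ S x, ∀ u ∈ S x ∪ S w, u ≠ w → π w < π u)).card : ℝ) := by
  classical
  intro P hP
  set N : ℕ := Fintype.card (α ≃ Fin (Fintype.card α)) with hN
  set Q : Finset (α × α) := Finset.univ.filter (fun p : α × α => p.1 ≠ p.2 ∧ p.1 ∈ S p.2)
    with hQ
  set d : α → ℕ := fun v => (S v).card - 1 with hd
  set c : α × α → ℕ := fun p => (Finset.univ.filter
      (fun π : α ≃ Fin (Fintype.card α) =>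
        ∀ x ∈ S p.1 ∪ S p.2, x ≠ p.1 → π p.1 < π x)).card with hc
  have hQmem : ∀ p : α × α, p ∈ Q ↔ p.1 ≠ p.2 ∧ p.1 ∈ S p.2 := by
    intro p; rw [hQ, Finset.mem_filter]; simp
  have hd1 : ∀ u v : α, u ≠ v → u ∈ S v → 1 ≤ d v := by
    intro u v huv huS
    have hsub : ({u, v} : Finset α) ⊆ S v := by
      intro x hx
      rcases Finset.mem_insert.1 hx with rfl | hx
      · exact huS
      · rw [Finset.mem_singleton] at hx; rw [hx]; exact hself v
    have := Finset.card_le_card hsub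
    rw [Finset.card_pair huv] at this
    simp only [hd]; omega
  have hdQ : ∀ p ∈ Q, 1 ≤ d p.1 ∧ 1 ≤ d p.2 := by
    intro p hp
    obtain ⟨hne, hS⟩ := (hQmem p).1 hp
    exact ⟨hd1 p.2 p.1 (Ne.symm hne) ((hsymm p.1 p.2).1 hS), hd1 p.1 p.2 hne hS⟩
  have hcN : ∀ p ∈ Q, (S p.1 ∪ S p.2).card * c p = N := by
    intro p hp
    simp only [hc, hN]
    exact count_min_mul (S p.1 ∪ S p.2) (Finset.mem_union_left _ (hself p.1))
  have htle : ∀ p ∈ Q, (S p.1 ∪ S p.2).card ≤ d p.1 + d p.2 := by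
    intro p hp
    obtain ⟨hne, hS⟩ := (hQmem p).1 hp
    have hui := Finset.card_union_add_card_inter (S p.1) (S p.2)
    have hsub : ({p.1, p.2} : Finset α) ⊆ S p.1 ∩ S p.2 := by
      intro x hx
      rcases Finset.mem_insert.1 hx with rfl | hx
      · exact Finset.mem_inter.2 ⟨hself p.1, hS⟩
      · rw [Finset.mem_singleton] at hx; subst hx
        exact Finset.mem_inter.2 ⟨(hsymm p.1 p.2).1 hS, hself p.2⟩
    have h2 := Finset.card_le_card hsub
    rw [Finset.card_pair hne] at h2
    have h3 : 1 ≤ (S p.1).card := Finset.card_pos.2 ⟨p.1, hself p.1⟩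
    have h4 : 1 ≤ (S p.2).card := Finset.card_pos.2 ⟨p.2, hself p.2⟩
    simp only [hd]; omega
  have hperm : ∀ p ∈ Q, (d p.2 : ℝ) * N / ((d p.1 : ℝ) + d p.2) ≤ (d p.2 : ℝ) * c p := by
    intro p hp
    have hd1' : (1 : ℝ) ≤ d p.1 := by exact_mod_cast (hdQ p hp).1
    have hd2' : (0 : ℝ) ≤ d p.2 := by positivity
    have hden : (0 : ℝ) < (d p.1 : ℝ) + d p.2 := by linarith
    rw [div_le_iff₀ hden]
    have hnat : d p.2 * N ≤ d p.2 * c p * (d p.1 + d p.2) := by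
      calc d p.2 * N = d p.2 * ((S p.1 ∪ S p.2).card * c p) := by rw [hcN p hp]
        _ ≤ d p.2 * ((d p.1 + d p.2) * c p) :=
            Nat.mul_le_mul_left _ (Nat.mul_le_mul_right _ (htle p hp))
        _ = d p.2 * c p * (d p.1 + d p.2) := by ring
    exact_mod_cast hnat
  have hQswap : ∀ p ∈ Q, p.swap ∈ Q := by
    intro p hp
    obtain ⟨hne, hS⟩ := (hQmem p).1 hp
    exact (hQmem p.swap).2 ⟨Ne.symm hne, (hsymm p.1 p.2).1 hS⟩
  set g : α × α → ℝ := fun p => (d p.2 : ℝ) * N / ((d p.1 : ℝ) + d p.2) with hg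
  have key4 : ∑ p ∈ Q, g p = (P.card : ℝ) * N := by
    have hgs : ∑ p ∈ Q, g p = ∑ p ∈ Q, g p.swap :=
      Finset.sum_nbij' (i := Prod.swap) (j := Prod.swap) hQswap hQswap
        (by simp) (by simp) (fun a _ => by simp)
    have h2g : ∀ p ∈ Q, g p + g p.swap = (N : ℝ) := by
      intro p hp
      have hd1' : (1 : ℝ) ≤ d p.1 := by exact_mod_cast (hdQ p hp).1
      have hd2' : (0 : ℝ) ≤ d p.2 := by positivity
      have hden : ((d p.1 : ℝ) + d p.2) ≠ 0 := by linarith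
      simp only [hg, Prod.fst_swap, Prod.snd_swap]
      rw [add_comm ((d p.2 : ℝ)) ((d p.1 : ℝ)), ← add_div, div_eq_iff hden]
      ring
    have hQc : (Q.card : ℝ) = 2 * P.card := by
      rw [hQ]; exact_mod_cast congrArg (Nat.cast : ℕ → ℝ) (Q_card S hsymm P hP)
    have h2 : (2 : ℝ) * ∑ p ∈ Q, g p = 2 * P.card * N := by
      calc (2 : ℝ) * ∑ p ∈ Q, g p = ∑ p ∈ Q, g p + ∑ p ∈ Q, g p.swap := by
            rw [← hgs]; ring
        _ = ∑ p ∈ Q, (g p + g p.swap) := (Finset.sum_add_distrib).symm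
        _ = ∑ _p ∈ Q, (N : ℝ) := Finset.sum_congr rfl h2g
        _ = (Q.card : ℝ) * N := by rw [Finset.sum_const, nsmul_eq_mul]
        _ = 2 * P.card * N := by rw [hQc]
    linarith
  have stepAR : ∀ π : α ≃ Fin (Fintype.card α),
      ∑ p ∈ Q, (if (∀ x ∈ S p.1 ∪ S p.2, x ≠ p.1 → π p.1 < π x) then (d p.2 : ℝ) else 0)
        ≤ 2 * ((P.filter (fun e => ∃ x ∈ e,
            ∃ w ∈ S x, ∀ u ∈ S x ∪ S w, u ≠ w → π w < π u)).card : ℝ) := by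
    intro π
    have h := stepA S hself hsymm P hP π
    have h' := (Nat.cast_le (α := ℝ)).mpr h
    rw [Nat.cast_sum, Nat.cast_mul] at h'
    simp only [Nat.cast_ite, Nat.cast_zero, Nat.cast_ofNat] at h'
    simp only [hd, hQ]
    exact h'
  have hsum1 : ∑ π : α ≃ Fin (Fintype.card α), ∑ p ∈ Q,
        (if (∀ x ∈ S p.1 ∪ S p.2, x ≠ p.1 → π p.1 < π x) then (d p.2 : ℝ) else 0)
      = ∑ p ∈ Q, (d p.2 : ℝ) * c p := by
    rw [Finset.sum_comm]
    refine Finset.sum_congr rfl fun p _ => ?_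
    rw [← Finset.sum_filter]
    rw [Finset.sum_const, nsmul_eq_mul]
    simp only [hc]
    rw [mul_comm]
  have main : (P.card : ℝ) * N ≤ 2 * ∑ π : α ≃ Fin (Fintype.card α),
      ((P.filter (fun e => ∃ x ∈ e,
          ∃ w ∈ S x, ∀ u ∈ S x ∪ S w, u ≠ w → π w < π u)).card : ℝ) := by
    calc (P.card : ℝ) * N = ∑ p ∈ Q, g p := key4.symm
      _ ≤ ∑ p ∈ Q, (d p.2 : ℝ) * c p := Finset.sum_le_sum hperm
      _ = ∑ π : α ≃ Fin (Fintype.card α), ∑ p ∈ Q,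
            (if (∀ x ∈ S p.1 ∪ S p.2, x ≠ p.1 → π p.1 < π x) then (d p.2 : ℝ) else 0) :=
          hsum1.symm
      _ ≤ ∑ π : α ≃ Fin (Fintype.card α), 2 * ((P.filter (fun e => ∃ x ∈ e,
            ∃ w ∈ S x, ∀ u ∈ S x ∪ S w, u ≠ w → π w < π u)).card : ℝ) :=
          Finset.sum_le_sum fun π _ => stepAR π
      _ = 2 * ∑ π : α ≃ Fin (Fintype.card α), ((P.filter (fun e => ∃ x ∈ e,
            ∃ w ∈ S x, ∀ u ∈ S x ∪ S w, u ≠ w → π w < π u)).card : ℝ) :=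
          (Finset.mul_sum _ _ _).symm
  linarith
end
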